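/- arXiv:2311.02532 — 4 statements merged into one kernel-verified Lean document; each statement's English description precedes it below -/
import Mathlib

section
/- Let (Ω, F, P) be a probability space, O a random element of a measurable space, A a {0,1}-valued random variable, and Y a square-integrable real random variable. Let π be a measurable function of O with 0 < π(O) ≤ 1 almost surely that is a version of P(A = 1 | σ(O)), and let V¹ be a measurable function of O with V¹(O) square-integrable and E[1{A=1}(Y − V¹(O)) | σ(O)] = 0 almost surely. Then for any measurable functions π̂ and V̂ of O with π̂(O) ≥ ε almost surely for some ε > 0 and V̂(O) square-integrable, E[V̂(O) + (1{A=1}/π̂(O))(Y − V̂(O))] − E[V¹(O)] = E[(π(O)/π̂(O) − 1)(V¹(O) − V̂(O))]. -/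
/-!
Write `a = 1{A = 1}`, `w = 1/π̂(O)` and `m = σ(O)`. The AIPW integrand splits as
`V̂ + w·a·(Y − V¹) + w·(V¹ − V̂)·a`. Since `w` and `V¹ − V̂` are `m`-measurable, conditioning on `m`
kills the middle term (by `E[a(Y − V¹) | m] = 0`) and turns the last `a` into `π(O) = E[a | m]`,
so the bias is `E[(π(O)·w − 1)(V¹ − V̂)]`.
-/

open MeasureTheory

namespace MeasureTheory

variable {Ω : Type*} {m m₀ : MeasurableSpace Ω} {μ : Measure[m₀] Ω}

theorem integrable_mul_of_ae_eq_condExp {f g φ : Ω → ℝ} (hf : StronglyMeasurable[m] f)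
    (hfg : Integrable (f * g) μ) (hg : Integrable g μ) (hφ : φ =ᵐ[μ] μ[g | m]) :
    Integrable (f * φ) μ := by
  refine (integrable_condExp (m := m) (f := f * g)).congr ?_
  filter_upwards [condExp_mul_of_stronglyMeasurable_left hf hfg hg, hφ] with ω hfg hφ
  rw [hfg, Pi.mul_apply, Pi.mul_apply, hφ]

theorem integral_mul_eq_of_ae_eq_condExp (hm : m ≤ m₀) [SigmaFinite (μ.trim hm)]
    {f g φ : Ω → ℝ} (hf : StronglyMeasurable[m] f) (hfg : Integrable (f * g) μ)
    (hg : Integrable g μ) (hφ : φ =ᵐ[μ] μ[g | m]) :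
    ∫ ω, f ω * g ω ∂μ = ∫ ω, f ω * φ ω ∂μ := by
  rw [← integral_condExp hm]
  refine integral_congr_ae ?_
  filter_upwards [condExp_mul_of_stronglyMeasurable_left hf hfg hg, hφ] with ω hfg hφ
  exact hfg.trans (by rw [Pi.mul_apply, hφ])

end MeasureTheory

section

variable {Ω : Type*} {m m₀ : MeasurableSpace Ω} {μ : Measure[m₀] Ω}

theorem integral_aipw_sub_integral (hm : m ≤ m₀) [IsFiniteMeasure μ]
    {a y v v' w p : Ω → ℝ} {B C : ℝ}
    (ha : AEStronglyMeasurable a μ) (ha_bdd : ∀ᵐ ω ∂μ, ‖a ω‖ ≤ B) (hy : Integrable y μ)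
    (hv : StronglyMeasurable[m] v) (hv_int : Integrable v μ)
    (hv' : StronglyMeasurable[m] v') (hv'_int : Integrable v' μ)
    (hw : StronglyMeasurable[m] w) (hw_bdd : ∀ᵐ ω ∂μ, ‖w ω‖ ≤ C)
    (hp : p =ᵐ[μ] μ[a | m]) (hres : μ[fun ω => a ω * (y ω - v ω) | m] =ᵐ[μ] 0) :
    ∫ ω, (v' ω + a ω * w ω * (y ω - v' ω)) ∂μ - ∫ ω, v ω ∂μ
      = ∫ ω, (p ω * w ω - 1) * (v ω - v' ω) ∂μ := by
  set k : Ω → ℝ := fun ω => w ω * (v ω - v' ω)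
  have hk : StronglyMeasurable[m] k := hw.mul (hv.sub hv')
  have hw_ae : AEStronglyMeasurable w μ := (hw.mono hm).aestronglyMeasurable
  have ha_int : Integrable a μ := .of_bound ha B ha_bdd
  have hres_int : Integrable (fun ω => a ω * (y ω - v ω)) μ := (hy.sub hv_int).bdd_mul ha ha_bdd
  have hwres_int : Integrable (fun ω => w ω * (a ω * (y ω - v ω))) μ :=
    hres_int.bdd_mul hw_ae hw_bdd
  have hdiff_int : Integrable (fun ω => v ω - v' ω) μ := hv_int.sub hv'_int
  have hk_int : Integrable k μ := hdiff_int.bdd_mul hw_ae hw_bdd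
  have hka_int : Integrable (fun ω => k ω * a ω) μ := hk_int.mul_bdd ha ha_bdd
  have hkp_int : Integrable (fun ω => k ω * p ω) μ :=
    integrable_mul_of_ae_eq_condExp hk hka_int ha_int hp
  have hwres : ∫ ω, w ω * (a ω * (y ω - v ω)) ∂μ = 0 := by
    simpa using integral_mul_eq_of_ae_eq_condExp hm hw hwres_int hres_int hres.symm
  have hka : ∫ ω, k ω * a ω ∂μ = ∫ ω, k ω * p ω ∂μ :=
    integral_mul_eq_of_ae_eq_condExp hm hk hka_int ha_int hp
  calc ∫ ω, (v' ω + a ω * w ω * (y ω - v' ω)) ∂μ - ∫ ω, v ω ∂μ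
      = ∫ ω, (v' ω + w ω * (a ω * (y ω - v ω)) + k ω * a ω) ∂μ - ∫ ω, v ω ∂μ := by
        congr 1; refine integral_congr_ae (.of_forall fun ω => ?_); simp only [k]; ring
    _ = ∫ ω, k ω * p ω ∂μ - ∫ ω, (v ω - v' ω) ∂μ := by
        have hsum_int : Integrable (fun ω => v' ω + w ω * (a ω * (y ω - v ω))) μ :=
          hv'_int.add hwres_int
        rw [integral_add hsum_int hka_int, integral_add hv'_int hwres_int, hwres, hka,
          integral_sub hv_int hv'_int]
        ring
    _ = ∫ ω, (p ω * w ω - 1) * (v ω - v' ω) ∂μ := by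
        rw [← integral_sub hkp_int hdiff_int]
        refine integral_congr_ae (.of_forall fun ω => ?_); simp only [k]; ring

end

theorem aipw_double_robustness_identity_general
    {Ω 𝒪 : Type*} [MeasurableSpace Ω] [MeasurableSpace 𝒪]
    (P : Measure Ω) [IsProbabilityMeasure P]
    (O : Ω → 𝒪) (hO : Measurable O)
    (A : Ω → Bool) (hA : Measurable A)
    (Y : Ω → ℝ) (hY : MemLp Y 2 P)
    (π : 𝒪 → ℝ)
    (hπcond : (fun ω => π (O ω)) =ᵐ[P]
      P[fun ω => if A ω then (1 : ℝ) else 0 | MeasurableSpace.comap O inferInstance])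
    (V1 : 𝒪 → ℝ) (hV1m : Measurable V1) (hV1 : MemLp (fun ω => V1 (O ω)) 2 P)
    (hV1cond :
      P[fun ω => (if A ω then (1 : ℝ) else 0) * (Y ω - V1 (O ω)) |
          MeasurableSpace.comap O inferInstance] =ᵐ[P] 0)
    (πhat Vhat : 𝒪 → ℝ) (hπhatm : Measurable πhat) (hVhatm : Measurable Vhat)
    (ε : ℝ) (hε : 0 < ε) (hπhat : ∀ᵐ ω ∂P, ε ≤ πhat (O ω))
    (hVhat : MemLp (fun ω => Vhat (O ω)) 2 P) :
    (∫ ω, (Vhat (O ω)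
          + (if A ω then (1 : ℝ) else 0) / πhat (O ω) * (Y ω - Vhat (O ω))) ∂P)
        - ∫ ω, V1 (O ω) ∂P
      = ∫ ω, (π (O ω) / πhat (O ω) - 1) * (V1 (O ω) - Vhat (O ω)) ∂P := by
  have hOm := comap_measurable (m := ‹MeasurableSpace 𝒪›) O
  have hA_ind : Measurable fun ω => if A ω then (1 : ℝ) else 0 :=
    (measurable_of_countable fun b : Bool => if b then (1 : ℝ) else 0).comp hA
  have hA_bdd : ∀ ω, ‖if A ω then (1 : ℝ) else 0‖ ≤ 1 := fun ω => by cases A ω <;> simp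
  have hw_bdd : ∀ᵐ ω ∂P, ‖(πhat (O ω))⁻¹‖ ≤ ε⁻¹ := by
    filter_upwards [hπhat] with ω hω
    rw [norm_inv, Real.norm_of_nonneg (hε.le.trans hω)]
    exact inv_anti₀ hε hω
  simpa only [div_eq_mul_inv] using integral_aipw_sub_integral (v := fun ω => V1 (O ω))
    (v' := fun ω => Vhat (O ω)) (w := fun ω => (πhat (O ω))⁻¹) hO.comap_le
    hA_ind.aestronglyMeasurable (.of_forall hA_bdd) (hY.integrable one_le_two)
    (hV1m.comp hOm).stronglyMeasurable (hV1.integrable one_le_two)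
    (hVhatm.comp hOm).stronglyMeasurable (hVhat.integrable one_le_two)
    (hπhatm.comp hOm).inv.stronglyMeasurable hw_bdd hπcond hV1cond

/-- **Double-robustness bias identity for the AIPW estimator.**
With `π` a version of `P(A = 1 | σ(O))` satisfying `0 < π(O) ≤ 1` a.s. and `V¹` a
square-integrable function of `O` with `E[1{A=1}(Y − V¹(O)) | σ(O)] = 0` a.s., for any
measurable `π̂, V̂` of `O` with `π̂(O) ≥ ε > 0` a.s. and `V̂(O)` square-integrable,
`E[V̂(O) + (1{A=1}/π̂(O))(Y − V̂(O))] − E[V¹(O)] = E[(π(O)/π̂(O) − 1)(V¹(O) − V̂(O))]`. -/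
theorem aipw_double_robustness_identity
    {Ω 𝒪 : Type*} [MeasurableSpace Ω] [MeasurableSpace 𝒪]
    (P : Measure Ω) [IsProbabilityMeasure P]
    (O : Ω → 𝒪) (hO : Measurable O)
    (A : Ω → Bool) (hA : Measurable A)
    (Y : Ω → ℝ) (hY : MemLp Y 2 P)
    (π : 𝒪 → ℝ) (hπm : Measurable π)
    (hπ : ∀ᵐ ω ∂P, 0 < π (O ω) ∧ π (O ω) ≤ 1)
    (hπcond : (fun ω => π (O ω)) =ᵐ[P]
      P[fun ω => if A ω then (1 : ℝ) else 0 | MeasurableSpace.comap O inferInstance])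
    (V1 : 𝒪 → ℝ) (hV1m : Measurable V1) (hV1 : MemLp (fun ω => V1 (O ω)) 2 P)
    (hV1cond :
      P[fun ω => (if A ω then (1 : ℝ) else 0) * (Y ω - V1 (O ω)) |
          MeasurableSpace.comap O inferInstance] =ᵐ[P] 0)
    (πhat Vhat : 𝒪 → ℝ) (hπhatm : Measurable πhat) (hVhatm : Measurable Vhat)
    (ε : ℝ) (hε : 0 < ε) (hπhat : ∀ᵐ ω ∂P, ε ≤ πhat (O ω))
    (hVhat : MemLp (fun ω => Vhat (O ω)) 2 P) :
    (∫ ω, (Vhat (O ω)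
          + (if A ω then (1 : ℝ) else 0) / πhat (O ω) * (Y ω - Vhat (O ω))) ∂P)
        - ∫ ω, V1 (O ω) ∂P
      = ∫ ω, (π (O ω) / πhat (O ω) - 1) * (V1 (O ω) - Vhat (O ω)) ∂P :=
  aipw_double_robustness_identity_general P O hO A hA Y hY π hπcond V1 hV1m hV1 hV1cond πhat Vhat
    hπhatm hVhatm ε hε hπhat hVhat
end

section
/- Let (Ω, F, P) be a probability space, O a random element of a measurable space, A a {0,1}-valued random variable, and Y a square-integrable real random variable. Let π be a measurable function of O with ε ≤ π(O) ≤ 1 − ε almost surely for some ε > 0, such that π(O) is a version of P(A = 1 | σ(O)). For a ∈ {0,1} write π_a(O) for π(O) if a = 1 and 1 − π(O) if a = 0; let V^a be a measurable function of O with V^a(O) square-integrable and E[1{A=a}(Y − V^a(O)) | σ(O)] = 0 almost surely, and let σ_a²(O) be a nonnegative measurable function of O with E[1{A=a}(Y − V^a(O))² | σ(O)] = π_a(O)·σ_a²(O) almost surely. Define ψ = Σ_{a∈{0,1}} (−1)^{a+1} [V^a(O) + (1{A=a}/π_a(O))(Y − V^a(O))]. Then E[ψ] = E[V¹(O) − V⁰(O)]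 and Var(ψ) = E[σ_1²(O)/π(O)] + E[σ_0²(O)/(1 − π(O))] + Var(V¹(O) − V⁰(O)). -/
/-!
Write `ψ = D + R₁ - R₀` with `D = V¹(O) - V⁰(O)` and `R_a = 1{A=a}(Y - V^a(O)) / π_a(O)`.
Because `π_a(O)` and `D` are `σ(O)`-measurable they can be pulled out of conditional
expectations given `O`; the first moment condition then makes each `R_a` centred and orthogonal
to `D`, and the second gives `E[R_a²] = E[π_a(O)⁻² · π_a(O) σ_a²(O)] = E[σ_a²(O) / π_a(O)]`.
Since the two arms have disjoint supports, `R₁ R₀ = 0`, so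
`Var ψ = Var D + E[(R₁ - R₀)²] = Var D + E[R₁²] + E[R₀²]`.
-/

open MeasureTheory ProbabilityTheory

section ConditionalMoments

variable {Ω : Type*} {m mΩ : MeasurableSpace Ω} {P : Measure Ω}

lemma MeasureTheory.MemLp.div_of_ae_le {p : ENNReal} {Z c : Ω → ℝ} {ε : ℝ}
    (hZ : MemLp Z p P) (hc : AEStronglyMeasurable c P) (hε : 0 < ε) (hεc : ∀ᵐ ω ∂P, ε ≤ c ω) :
    MemLp (fun ω => Z ω / c ω) p P := by
  refine (hZ.const_mul ε⁻¹).of_le (hZ.1.div₀ hc) ?_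
  filter_upwards [hεc] with ω hω
  rw [norm_div, norm_mul, Real.norm_of_nonneg (inv_nonneg.2 hε.le),
    Real.norm_of_nonneg (hε.le.trans hω), div_eq_inv_mul]
  exact mul_le_mul_of_nonneg_right (inv_anti₀ hε hω) (norm_nonneg _)

lemma variance_add_eq_of_integral_eq_zero [IsProbabilityMeasure P] {X R : Ω → ℝ}
    (hX : MemLp X 2 P) (hR : MemLp R 2 P) (hR0 : ∫ ω, R ω ∂P = 0) (hXR : ∫ ω, X ω * R ω ∂P = 0) :
    Var[X + R; P] = Var[X; P] + ∫ ω, R ω ^ 2 ∂P := by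
  rw [variance_add hX hR, covariance_eq_sub hX hR, variance_eq_sub hR]
  simp [hR0, hXR]

lemma variance_add_sub_eq_of_mul_eq_zero [IsProbabilityMeasure P] {X R₁ R₀ : Ω → ℝ}
    (hX : MemLp X 2 P) (hR₁ : MemLp R₁ 2 P) (hR₀ : MemLp R₀ 2 P)
    (hR₁0 : ∫ ω, R₁ ω ∂P = 0) (hR₀0 : ∫ ω, R₀ ω ∂P = 0)
    (hXR₁ : ∫ ω, X ω * R₁ ω ∂P = 0) (hXR₀ : ∫ ω, X ω * R₀ ω ∂P = 0)
    (hR₁R₀ : ∀ ω, R₁ ω * R₀ ω = 0) :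
    Var[X + (R₁ - R₀); P] = ∫ ω, R₁ ω ^ 2 ∂P + ∫ ω, R₀ ω ^ 2 ∂P + Var[X; P] := by
  have hmean : ∫ ω, (R₁ - R₀) ω ∂P = 0 := by
    rw [integral_sub' (hR₁.integrable one_le_two) (hR₀.integrable one_le_two), hR₁0, hR₀0,
      sub_zero]
  have horth : ∫ ω, X ω * (R₁ - R₀) ω ∂P = 0 := by
    simp_rw [Pi.sub_apply, mul_sub]
    rw [integral_sub (f := fun ω => X ω * R₁ ω) (g := fun ω => X ω * R₀ ω)
      (hX.integrable_mul hR₁) (hX.integrable_mul hR₀), hXR₁, hXR₀, sub_zero]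
  have hsq : ∀ ω, (R₁ - R₀) ω ^ 2 = R₁ ω ^ 2 + R₀ ω ^ 2 := fun ω => by
    rw [Pi.sub_apply]
    linear_combination -2 * hR₁R₀ ω
  rw [variance_add_eq_of_integral_eq_zero hX (hR₁.sub hR₀) hmean horth,
    integral_congr_ae (.of_forall hsq), integral_add hR₁.integrable_sq hR₀.integrable_sq,
    add_comm]

section PullOut

variable [IsFiniteMeasure P]

lemma integral_mul_eq_integral_mul_of_condExp_ae_eq (hm : m ≤ mΩ) {g Z h : Ω → ℝ}
    (hg : Measurable[m] g) (hgZ : Integrable (g * Z) P) (hZ : Integrable Z P)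
    (hZh : P[Z|m] =ᵐ[P] h) :
    ∫ ω, g ω * Z ω ∂P = ∫ ω, g ω * h ω ∂P :=
  calc ∫ ω, g ω * Z ω ∂P = ∫ ω, (P[g * Z|m]) ω ∂P := (integral_condExp hm).symm
    _ = ∫ ω, g ω * h ω ∂P := integral_congr_ae <|
        (condExp_mul_of_stronglyMeasurable_left hg.stronglyMeasurable hgZ hZ).trans
          ((Filter.EventuallyEq.refl _ g).mul hZh)

lemma integral_mul_div_eq_zero_of_condExp_ae_eq_zero (hm : m ≤ mΩ) {X c Z : Ω → ℝ} {ε : ℝ}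
    (hX : Measurable[m] X) (hX2 : MemLp X 2 P) (hc : Measurable[m] c)
    (hε : 0 < ε) (hεc : ∀ᵐ ω ∂P, ε ≤ c ω) (hZ : MemLp Z 2 P) (hZ0 : P[Z|m] =ᵐ[P] 0) :
    ∫ ω, X ω * (Z ω / c ω) ∂P = 0 := by
  have hXZc : ∀ ω, X ω * (Z ω / c ω) = (X ω / c ω) * Z ω := fun ω => by ring
  simp_rw [hXZc]
  have hint : Integrable ((X / c) * Z) P :=
    (hX2.integrable_mul (hZ.div_of_ae_le (hc.mono hm le_rfl).aestronglyMeasurable hε hεc)).congr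
      (.of_forall hXZc)
  simpa using integral_mul_eq_integral_mul_of_condExp_ae_eq hm (hX.div hc) hint
    (hZ.integrable one_le_two) hZ0

lemma integral_div_sq_eq_of_condExp_sq_ae_eq (hm : m ≤ mΩ) {c s Z : Ω → ℝ} {ε : ℝ}
    (hc : Measurable[m] c) (hε : 0 < ε) (hεc : ∀ᵐ ω ∂P, ε ≤ c ω) (hZ : MemLp Z 2 P)
    (hZs : P[fun ω => Z ω ^ 2|m] =ᵐ[P] fun ω => c ω * s ω) :
    ∫ ω, (Z ω / c ω) ^ 2 ∂P = ∫ ω, s ω / c ω ∂P := by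
  have hZc : ∀ ω, (Z ω / c ω) ^ 2 = (c ω ^ 2)⁻¹ * Z ω ^ 2 := fun ω => by ring
  simp_rw [hZc]
  have hint : Integrable ((fun ω => (c ω ^ 2)⁻¹) * fun ω => Z ω ^ 2) P :=
    (hZ.div_of_ae_le (hc.mono hm le_rfl).aestronglyMeasurable hε hεc).integrable_sq.congr
      (.of_forall hZc)
  rw [integral_mul_eq_integral_mul_of_condExp_ae_eq (g := fun ω => (c ω ^ 2)⁻¹) hm
    (hc.pow_const 2).inv hint hZ.integrable_sq hZs]
  refine integral_congr_ae ?_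
  filter_upwards [hεc] with ω hω
  have : c ω ≠ 0 := (hε.trans_le hω).ne'
  field_simp

end PullOut

lemma integral_and_variance_add_div_sub_div_eq [IsProbabilityMeasure P] (hm : m ≤ mΩ)
    {X Z₁ Z₀ c₁ c₀ s₁ s₀ : Ω → ℝ} {ε : ℝ} (hε : 0 < ε) (hX : Measurable[m] X) (hX2 : MemLp X 2 P)
    (hc₁ : Measurable[m] c₁) (hc₀ : Measurable[m] c₀)
    (hεc₁ : ∀ᵐ ω ∂P, ε ≤ c₁ ω) (hεc₀ : ∀ᵐ ω ∂P, ε ≤ c₀ ω)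
    (hZ₁ : MemLp Z₁ 2 P) (hZ₀ : MemLp Z₀ 2 P) (hZ₁Z₀ : ∀ ω, Z₁ ω * Z₀ ω = 0)
    (hZ₁0 : P[Z₁|m] =ᵐ[P] 0) (hZ₀0 : P[Z₀|m] =ᵐ[P] 0)
    (hs₁ : P[fun ω => Z₁ ω ^ 2|m] =ᵐ[P] fun ω => c₁ ω * s₁ ω)
    (hs₀ : P[fun ω => Z₀ ω ^ 2|m] =ᵐ[P] fun ω => c₀ ω * s₀ ω) :
    ∫ ω, X ω + (Z₁ ω / c₁ ω - Z₀ ω / c₀ ω) ∂P = ∫ ω, X ω ∂P ∧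
      Var[fun ω => X ω + (Z₁ ω / c₁ ω - Z₀ ω / c₀ ω); P]
        = ∫ ω, s₁ ω / c₁ ω ∂P + ∫ ω, s₀ ω / c₀ ω ∂P + Var[X; P] := by
  have hR₁ := hZ₁.div_of_ae_le (hc₁.mono hm le_rfl).aestronglyMeasurable hε hεc₁
  have hR₀ := hZ₀.div_of_ae_le (hc₀.mono hm le_rfl).aestronglyMeasurable hε hεc₀
  have hmean₁ : ∫ ω, Z₁ ω / c₁ ω ∂P = 0 := by
    simpa using integral_mul_div_eq_zero_of_condExp_ae_eq_zero hm measurable_const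
      (memLp_const 1) hc₁ hε hεc₁ hZ₁ hZ₁0
  have hmean₀ : ∫ ω, Z₀ ω / c₀ ω ∂P = 0 := by
    simpa using integral_mul_div_eq_zero_of_condExp_ae_eq_zero hm measurable_const
      (memLp_const 1) hc₀ hε hεc₀ hZ₀ hZ₀0
  refine ⟨?_, ?_⟩
  · rw [integral_add (g := fun ω => Z₁ ω / c₁ ω - Z₀ ω / c₀ ω)
      (hX2.integrable one_le_two) ((hR₁.sub hR₀).integrable one_le_two),
      integral_sub (hR₁.integrable one_le_two) (hR₀.integrable one_le_two),
      hmean₁, hmean₀, sub_zero, add_zero]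
  · rw [← integral_div_sq_eq_of_condExp_sq_ae_eq hm hc₁ hε hεc₁ hZ₁ hs₁,
      ← integral_div_sq_eq_of_condExp_sq_ae_eq hm hc₀ hε hεc₀ hZ₀ hs₀]
    refine variance_add_sub_eq_of_mul_eq_zero hX2 hR₁ hR₀ hmean₁ hmean₀
      (integral_mul_div_eq_zero_of_condExp_ae_eq_zero hm hX hX2 hc₁ hε hεc₁ hZ₁ hZ₁0)
      (integral_mul_div_eq_zero_of_condExp_ae_eq_zero hm hX hX2 hc₀ hε hεc₀ hZ₀ hZ₀0)
      fun ω => ?_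
    rw [div_mul_div_comm, hZ₁Z₀, zero_div]

end ConditionalMoments

theorem aipw_score_variance_decomposition_general
    {Ω 𝒪 : Type*} [MeasurableSpace Ω] [MeasurableSpace 𝒪]
    (P : Measure Ω) [IsProbabilityMeasure P]
    (O : Ω → 𝒪) (hO : Measurable O)
    (A : Ω → Bool) (hA : Measurable A)
    (Y : Ω → ℝ) (hY : MemLp Y 2 P)
    (π : 𝒪 → ℝ) (hπm : Measurable π)
    (ε : ℝ) (hε : 0 < ε)
    (hπ : ∀ᵐ ω ∂P, ε ≤ π (O ω) ∧ π (O ω) ≤ 1 - ε)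
    (V : Bool → 𝒪 → ℝ) (hVm : ∀ a, Measurable (V a))
    (hVL2 : ∀ a, MemLp (fun ω => V a (O ω)) 2 P)
    (hVcond : ∀ a,
      P[fun ω => (if A ω = a then (1 : ℝ) else 0) * (Y ω - V a (O ω)) |
          MeasurableSpace.comap O inferInstance] =ᵐ[P] 0)
    (s2 : Bool → 𝒪 → ℝ)
    (hs2cond : ∀ a,
      P[fun ω => (if A ω = a then (1 : ℝ) else 0) * (Y ω - V a (O ω)) ^ 2 |
          MeasurableSpace.comap O inferInstance]
        =ᵐ[P] fun ω => (if a then π (O ω) else 1 - π (O ω)) * s2 a (O ω)) :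
    (∫ ω, ((V true (O ω)
            + (if A ω = true then (1 : ℝ) else 0) / π (O ω) * (Y ω - V true (O ω)))
          - (V false (O ω)
            + (if A ω = false then (1 : ℝ) else 0) / (1 - π (O ω))
                * (Y ω - V false (O ω)))) ∂P
        = ∫ ω, (V true (O ω) - V false (O ω)) ∂P) ∧
    variance (fun ω =>
        (V true (O ω)
            + (if A ω = true then (1 : ℝ) else 0) / π (O ω) * (Y ω - V true (O ω)))
          - (V false (O ω)
            + (if A ω = false then (1 : ℝ) else 0) / (1 - π (O ω))
                * (Y ω - V false (O ω)))) P
      = (∫ ω, s2 true (O ω) / π (O ω) ∂P) + (∫ ω, s2 false (O ω) / (1 - π (O ω)) ∂P)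
          + variance (fun ω => V true (O ω) - V false (O ω)) P := by
  have hOO : Measurable[MeasurableSpace.comap O inferInstance] O := comap_measurable O
  let c : Bool → Ω → ℝ := fun a ω => if a then π (O ω) else 1 - π (O ω)
  let Z : Bool → Ω → ℝ := fun a ω => (if A ω = a then (1 : ℝ) else 0) * (Y ω - V a (O ω))
  have hc : ∀ a, Measurable[MeasurableSpace.comap O inferInstance] (c a) := by
    rintro (_ | _)
    · exact (hπm.comp hOO).const_sub 1
    · exact hπm.comp hOO
  have hεc : ∀ a, ∀ᵐ ω ∂P, ε ≤ c a ω := by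
    rintro (_ | _) <;> filter_upwards [hπ] with ω hω <;>
      simp only [c, Bool.false_eq_true, ↓reduceIte] <;> linarith [hω.1, hω.2]
  have hZ : ∀ a, MemLp (Z a) 2 P := fun a => by
    refine (hY.sub (hVL2 a)).of_le ?_ (.of_forall fun ω => ?_)
    · exact ((measurable_const.ite (hA (measurableSet_singleton a)) measurable_const)
        |>.aestronglyMeasurable).mul (hY.sub (hVL2 a)).1
    · by_cases h : A ω = a <;> simp [Z, h]
  have hZsq : ∀ a, (fun ω => Z a ω ^ 2)
      = fun ω => (if A ω = a then (1 : ℝ) else 0) * (Y ω - V a (O ω)) ^ 2 := fun a => by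
    ext ω
    by_cases h : A ω = a <;> simp [Z, h]
  have hψ : (fun ω => (V true (O ω)
            + (if A ω = true then (1 : ℝ) else 0) / π (O ω) * (Y ω - V true (O ω)))
          - (V false (O ω)
            + (if A ω = false then (1 : ℝ) else 0) / (1 - π (O ω))
                * (Y ω - V false (O ω))))
      = fun ω => (V true (O ω) - V false (O ω))
          + (Z true ω / c true ω - Z false ω / c false ω) := by
    ext ω
    simp only [Z, c, Bool.false_eq_true, ↓reduceIte]
    ring
  rw [hψ]
  exact integral_and_variance_add_div_sub_div_eq hO.comap_le hε
    (((hVm true).comp hOO).sub ((hVm false).comp hOO)) ((hVL2 true).sub (hVL2 false))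
    (hc true) (hc false) (hεc true) (hεc false) (hZ true) (hZ false)
    (fun ω => by cases h : A ω <;> simp [Z, h]) (hVcond true) (hVcond false)
    (hZsq true ▸ hs2cond true) (hZsq false ▸ hs2cond false)

/-- **Variance decomposition of the AIPW score (single-stage efficiency bound `EB₁`).**
With `ε ≤ π(O) ≤ 1 − ε` a version of `P(A = 1 | σ(O))`, arm-wise value functions `V a`
satisfying `E[1{A=a}(Y − V^a(O)) | σ(O)] = 0` a.s., and conditional variances `s2 a`
satisfying `E[1{A=a}(Y − V^a(O))² | σ(O)] = π_a(O)·s2_a(O)` a.s., the AIPW score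
`ψ = Σ_a (−1)^{a+1} [V^a(O) + (1{A=a}/π_a(O))(Y − V^a(O))]` satisfies
`E[ψ] = E[V¹(O) − V⁰(O)]` and
`Var(ψ) = E[s2₁(O)/π(O)] + E[s2₀(O)/(1 − π(O))] + Var(V¹(O) − V⁰(O))`. -/
theorem aipw_score_variance_decomposition
    {Ω 𝒪 : Type*} [MeasurableSpace Ω] [MeasurableSpace 𝒪]
    (P : Measure Ω) [IsProbabilityMeasure P]
    (O : Ω → 𝒪) (hO : Measurable O)
    (A : Ω → Bool) (hA : Measurable A)
    (Y : Ω → ℝ) (hY : MemLp Y 2 P)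
    (π : 𝒪 → ℝ) (hπm : Measurable π)
    (ε : ℝ) (hε : 0 < ε)
    (hπ : ∀ᵐ ω ∂P, ε ≤ π (O ω) ∧ π (O ω) ≤ 1 - ε)
    (hπcond : (fun ω => π (O ω)) =ᵐ[P]
      P[fun ω => if A ω then (1 : ℝ) else 0 | MeasurableSpace.comap O inferInstance])
    (V : Bool → 𝒪 → ℝ) (hVm : ∀ a, Measurable (V a))
    (hVL2 : ∀ a, MemLp (fun ω => V a (O ω)) 2 P)
    (hVcond : ∀ a,
      P[fun ω => (if A ω = a then (1 : ℝ) else 0) * (Y ω - V a (O ω)) |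
          MeasurableSpace.comap O inferInstance] =ᵐ[P] 0)
    (s2 : Bool → 𝒪 → ℝ) (hs2m : ∀ a, Measurable (s2 a)) (hs2nn : ∀ a o, 0 ≤ s2 a o)
    (hs2cond : ∀ a,
      P[fun ω => (if A ω = a then (1 : ℝ) else 0) * (Y ω - V a (O ω)) ^ 2 |
          MeasurableSpace.comap O inferInstance]
        =ᵐ[P] fun ω => (if a then π (O ω) else 1 - π (O ω)) * s2 a (O ω)) :
    (∫ ω, ((V true (O ω)
            + (if A ω = true then (1 : ℝ) else 0) / π (O ω) * (Y ω - V true (O ω)))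
          - (V false (O ω)
            + (if A ω = false then (1 : ℝ) else 0) / (1 - π (O ω))
                * (Y ω - V false (O ω)))) ∂P
        = ∫ ω, (V true (O ω) - V false (O ω)) ∂P) ∧
    variance (fun ω =>
        (V true (O ω)
            + (if A ω = true then (1 : ℝ) else 0) / π (O ω) * (Y ω - V true (O ω)))
          - (V false (O ω)
            + (if A ω = false then (1 : ℝ) else 0) / (1 - π (O ω))
                * (Y ω - V false (O ω)))) P
      = (∫ ω, s2 true (O ω) / π (O ω) ∂P) + (∫ ω, s2 false (O ω) / (1 - π (O ω)) ∂P)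
          + variance (fun ω => V true (O ω) - V false (O ω)) P :=
  aipw_score_variance_decomposition_general P O hO A hA Y hY π hπm ε hε hπ V hVm hVL2 hVcond s2
    hs2cond
end

section
/- Fix a finite nonempty observation set 𝒪, an integer horizon T ≥ 1, actions in {0,1}, and a finite reward alphabet ℛ ⊂ ℝ. Let μ be a probability mass function on 𝒪 and, for each t ∈ {1,…,T}, each history h_t = (o_1, a_1, …, o_t) and each action a_t ∈ {0,1}, let q_t(·, · | h_t, a_t) be a probability mass function on ℛ × 𝒪 specifying jointly the reward R_t and the next observation O_{t+1} (the next-observation component being irrelevant at t = T). For a ∈ {0,1}, let E^a denote expectation under the process with O_1 ~ μ and A_t = a for all t; define V_t^a(h_t) = E^a[Σ_{k=t}^T R_k | H_t = h_t] with V_{T+1}^a ≡ 0, define σ_t²(h_t, a) = Var(R_t + V_{t+1}^a(H_{t+1}) − V_t^a(h_t) | H_t = h_t, A_t = a), and define σ_*²(o, a) = E^a[(Σ_{t=1}^T R_t − V_1^a(o))² | O_1 = o]; assume σ_*(o, a) > 0 for all o ∈ 𝒪 and a ∈ {0,1}. A behavior policy π^b assigns, for each t and history h_t, probabilities π_t^b(a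 | h_t) ≥ 0 summing to one over a ∈ {0,1}; let E^{π^b} denote expectation under the induced trajectory law and define EB_1(π^b) = T^{−2} Σ_{a∈{0,1}} Σ_{t=1}^T E^{π^b}[σ_t²(H_t, a) Π_{k≤t} 1(A_k = a)/π_k^b(a | H_k)²] + T^{−2} Var_{O_1∼μ}(V_1^1(O_1) − V_1^0(O_1)), with the convention that a summand is 0 on the event that A_k ≠ a for some k ≤ t. Then for every behavior policy π^b with π_t^b(a | h_t) > 0 for all t, a, h_t, one has EB_1(π^b) ≥ T^{−2} E_{O_1∼μ}[(σ_*(O_1, 0) + σ_*(O_1, 1))²] + T^{−2} Var_{O_1∼μ}(V_1^1(O_1) − V_1^0(O_1)), and equality holds for the policy π^{b*} defined by π_1^{b*}(a | o_1) = σ_*(o_1, a)/(σ_*(o_1, 0) + σ_*(o_1, 1)) and π_t^{b*}(a_1 | h_t) = 1 for all t ≥ 2 (that is, A_1 = A_2 = ⋯ = A_T under π^{b*}). -/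
/-!
Under the policy that always plays `a`, the temporal-difference errors
`R_t + V_{t+1}^a(H_{t+1}) − V_t^a(H_t)` are martingale differences that telescope to
`Σ_t R_t − V_1^a(O_1)`; hence the conditional variances `σ_t²` add up, in expectation given
`O_1 = o`, to `σ_*²(o, a)` (law of total variance).

Integrating out the steps after `t` and changing measure from `π^b` to the always-`a` policy turns
the `(a, t)` summand of `EB₁(π^b)` into `E^a[σ_t²(H_t, a) Π_{k ≤ t} 1/π_k^b(a | H_k)]`. Every factor
of the product is at least `1`, so the summand is at least `E^a[σ_t²(H_t, a) / π_1^b(a | O_1)]`,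
with equality for `π^{b*}`, whose factors after the first are all `1`. Summing over `t`,
`T² EB₁(π^b) − Var(V_1^1 − V_1^0) ≥ E_μ[Σ_a σ_*²(O_1, a) / π_1^b(a | O_1)]`, and by
Cauchy–Schwarz `Σ_a σ_a² / p_a ≥ (Σ_a σ_a)²` whenever `Σ_a p_a = 1`, with equality for
`p_a ∝ σ_a`.
-/

open Finset

/-- History at (0-indexed) time `t`: observations `o_0, …, o_t` and actions
`a_0, …, a_{t-1}` (this is the paper's `h_{t+1} = (o_1, a_1, …, o_{t+1})` in
1-indexed notation). -/
abbrev Hist (𝒪 : Type) (t : ℕ) : Type := (Fin (t + 1) → 𝒪) × (Fin t → Bool)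

/-- Extend a history by an action and a next observation. -/
def Hist.extend {𝒪 : Type} {t : ℕ} (h : Hist 𝒪 t) (a : Bool) (o : 𝒪) : Hist 𝒪 (t + 1) :=
  (Fin.snoc h.1 o, Fin.snoc h.2 a)

/-- The initial history consisting of a single observation. -/
def initHist {𝒪 : Type} (o : 𝒪) : Hist 𝒪 0 := (fun _ => o, fun i => i.elim0)

/-- Full trajectory over horizon `T`: observations `o_0, …, o_T` (the last one being the
irrelevant next observation produced at the final stage), actions `a_0, …, a_{T-1}` and
rewards `r_0, …, r_{T-1}`. -/
abbrev Traj (𝒪 R : Type) (T : ℕ) : Type :=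
  (Fin (T + 1) → 𝒪) × (Fin T → Bool) × (Fin T → R)

/-- The history prefix of a trajectory at time `t < T`. -/
def Traj.hist {𝒪 R : Type} {T : ℕ} (τ : Traj 𝒪 R T) (t : Fin T) : Hist 𝒪 t :=
  (fun i => τ.1 (Fin.castLE (Nat.succ_le_succ t.isLt.le) i),
   fun i => τ.2.1 (Fin.castLE t.isLt.le i))

/-- Auxiliary value function, by recursion on the number `k` of remaining stages:
`Vaux q val a k t h` is the expected sum of the next `k` rewards under the global
policy `a`, starting from history `h` at time `t`. -/
noncomputable def Vaux {𝒪 R : Type} [Fintype 𝒪] [Fintype R]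
    (q : (t : ℕ) → Hist 𝒪 t → Bool → R × 𝒪 → ℝ) (val : R → ℝ) (a : Bool) :
    (k : ℕ) → (t : ℕ) → Hist 𝒪 t → ℝ
  | 0, _, _ => 0
  | k + 1, t, h =>
    ∑ ro : R × 𝒪, q t h a ro * (val ro.1 + Vaux q val a k (t + 1) (h.extend a ro.2))

/-- Value function `V_t^a(h) = E^a[Σ_{k=t}^{T-1} R_k | H_t = h]` over horizon `T`. -/
noncomputable def Vfun {𝒪 R : Type} [Fintype 𝒪] [Fintype R] (T : ℕ)
    (q : (t : ℕ) → Hist 𝒪 t → Bool → R × 𝒪 → ℝ) (val : R → ℝ) (a : Bool)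
    (t : ℕ) (h : Hist 𝒪 t) : ℝ :=
  Vaux q val a (T - t) t h

/-- Conditional variance of the temporal-difference error
`R_t + V_{t+1}^a(H_{t+1}) − V_t^a(h)` given `H_t = h` and `A_t = a`. -/
noncomputable def tdVar {𝒪 R : Type} [Fintype 𝒪] [Fintype R] (T : ℕ)
    (q : (t : ℕ) → Hist 𝒪 t → Bool → R × 𝒪 → ℝ) (val : R → ℝ) (a : Bool)
    (t : ℕ) (h : Hist 𝒪 t) : ℝ :=
  let x : R × 𝒪 → ℝ := fun ro =>
    val ro.1 + Vfun T q val a (t + 1) (h.extend a ro.2) - Vfun T q val a t h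
  ∑ ro : R × 𝒪, q t h a ro * (x ro - ∑ ro' : R × 𝒪, q t h a ro' * x ro') ^ 2

/-- Probability of a full trajectory under initial distribution `μ`, transitions `q` and
(history-dependent) behavior policy `π`. -/
noncomputable def trajProb {𝒪 R : Type} [Fintype 𝒪] [Fintype R] {T : ℕ} (μ : 𝒪 → ℝ)
    (q : (t : ℕ) → Hist 𝒪 t → Bool → R × 𝒪 → ℝ)
    (π : (t : ℕ) → Hist 𝒪 t → Bool → ℝ) (τ : Traj 𝒪 R T) : ℝ :=
  μ (τ.1 0) * ∏ t : Fin T,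
    (π t (τ.hist t) (τ.2.1 t) * q t (τ.hist t) (τ.2.1 t) (τ.2.2 t, τ.1 t.succ))

/-- The global (deterministic) policy that always plays action `a`. -/
def globPol (𝒪 : Type) (a : Bool) : (t : ℕ) → Hist 𝒪 t → Bool → ℝ :=
  fun _ _ b => if b = a then 1 else 0

/-- `σ_*²(o, a) = E^a[(Σ_t R_t − V_1^a(o))² | O_1 = o]`: conditional variance of the
cumulative reward given the initial observation, under the global policy `a`. -/
noncomputable def sstarSq {𝒪 R : Type} [Fintype 𝒪] [DecidableEq 𝒪] [Fintype R] (T : ℕ)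
    (q : (t : ℕ) → Hist 𝒪 t → Bool → R × 𝒪 → ℝ) (val : R → ℝ)
    (o : 𝒪) (a : Bool) : ℝ :=
  ∑ τ : Traj 𝒪 R T, trajProb (fun o' => if o' = o then 1 else 0) q (globPol 𝒪 a) τ *
    ((∑ t : Fin T, val (τ.2.2 t)) - Vfun T q val a 0 (initHist o)) ^ 2

/-- The `(a, t)` summand of the sequential-importance-sampling part of the efficiency
bound: `E^{π^b}[σ_t²(H_t, a) Π_{k≤t} 1(A_k = a)/π_k^b(a|H_k)²]`, with the convention
that a summand is `0` on the event that `A_k ≠ a` for some `k ≤ t`. -/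
noncomputable def isTerm {𝒪 R : Type} [Fintype 𝒪] [Fintype R] (T : ℕ) (μ : 𝒪 → ℝ)
    (q : (t : ℕ) → Hist 𝒪 t → Bool → R × 𝒪 → ℝ) (val : R → ℝ)
    (πb : (t : ℕ) → Hist 𝒪 t → Bool → ℝ) (a : Bool) (t : Fin T) : ℝ :=
  ∑ τ : Traj 𝒪 R T, trajProb μ q πb τ * tdVar T q val a t (τ.hist t) *
    ∏ k : Fin T,
      if (k : ℕ) ≤ (t : ℕ) then
        (if τ.2.1 k = a then ((πb k (τ.hist k) a) ^ 2)⁻¹ else 0)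
      else 1

/-- `Var_{O_1∼μ}(V_1^1(O_1) − V_1^0(O_1))`. -/
noncomputable def varInit {𝒪 R : Type} [Fintype 𝒪] [Fintype R] (T : ℕ) (μ : 𝒪 → ℝ)
    (q : (t : ℕ) → Hist 𝒪 t → Bool → R × 𝒪 → ℝ) (val : R → ℝ) : ℝ :=
  ∑ o : 𝒪, μ o *
    ((Vfun T q val true 0 (initHist o) - Vfun T q val false 0 (initHist o))
      - ∑ o' : 𝒪, μ o' *
          (Vfun T q val true 0 (initHist o') - Vfun T q val false 0 (initHist o'))) ^ 2

/-- The efficiency bound `EB₁(π^b)` of Equation (3.1) of the paper. -/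
noncomputable def EB1 {𝒪 R : Type} [Fintype 𝒪] [Fintype R] (T : ℕ) (μ : 𝒪 → ℝ)
    (q : (t : ℕ) → Hist 𝒪 t → Bool → R × 𝒪 → ℝ) (val : R → ℝ)
    (πb : (t : ℕ) → Hist 𝒪 t → Bool → ℝ) : ℝ :=
  ((T : ℝ) ^ 2)⁻¹ * (∑ a : Bool, ∑ t : Fin T, isTerm T μ q val πb a t)
    + ((T : ℝ) ^ 2)⁻¹ * varInit T μ q val

/-- The proposed optimal design `π^{b*}`: randomize the initial action with
probabilities proportional to `σ_*(O_1, a)`, then repeat the initial action forever. -/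
noncomputable def piStar {𝒪 R : Type} [Fintype 𝒪] [DecidableEq 𝒪] [Fintype R] (T : ℕ)
    (q : (t : ℕ) → Hist 𝒪 t → Bool → R × 𝒪 → ℝ) (val : R → ℝ) :
    (t : ℕ) → Hist 𝒪 t → Bool → ℝ :=
  fun t h b =>
    if ht : t = 0 then
      Real.sqrt (sstarSq T q val (h.1 0) b) /
        (Real.sqrt (sstarSq T q val (h.1 0) false) + Real.sqrt (sstarSq T q val (h.1 0) true))
    else if b = h.2 ⟨0, Nat.pos_of_ne_zero ht⟩ then 1 else 0

namespace Traj

variable {𝒪 R : Type}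

def toHist {m : ℕ} (τ : Traj 𝒪 R m) : Hist 𝒪 m := (τ.1, τ.2.1)

def take {T : ℕ} (m : ℕ) (hm : m ≤ T) (τ : Traj 𝒪 R T) : Traj 𝒪 R m :=
  (fun i => τ.1 (Fin.castLE (Nat.succ_le_succ hm) i),
   fun i => τ.2.1 (Fin.castLE hm i),
   fun i => τ.2.2 (Fin.castLE hm i))

def snoc {m : ℕ} (σ : Traj 𝒪 R m) (b : Bool) (ro : R × 𝒪) : Traj 𝒪 R (m + 1) :=
  (Fin.snoc σ.1 ro.2, Fin.snoc σ.2.1 b, Fin.snoc σ.2.2 ro.1)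

variable {m : ℕ} (σ : Traj 𝒪 R m) (b : Bool) (ro : R × 𝒪)

@[simp]
lemma snoc_obs_castSucc (i : Fin (m + 1)) : (σ.snoc b ro).1 i.castSucc = σ.1 i :=
  Fin.snoc_castSucc (α := fun _ => _) ..

@[simp]
lemma snoc_act_castSucc (i : Fin m) : (σ.snoc b ro).2.1 i.castSucc = σ.2.1 i :=
  Fin.snoc_castSucc (α := fun _ => _) ..

@[simp]
lemma snoc_rew_castSucc (i : Fin m) : (σ.snoc b ro).2.2 i.castSucc = σ.2.2 i :=
  Fin.snoc_castSucc (α := fun _ => _) ..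

@[simp]
lemma snoc_obs_last : (σ.snoc b ro).1 (Fin.last (m + 1)) = ro.2 :=
  Fin.snoc_last (α := fun _ => _) ..

@[simp]
lemma snoc_act_last : (σ.snoc b ro).2.1 (Fin.last m) = b := Fin.snoc_last (α := fun _ => _) ..

@[simp]
lemma snoc_rew_last : (σ.snoc b ro).2.2 (Fin.last m) = ro.1 := Fin.snoc_last (α := fun _ => _) ..

@[simp]
lemma snoc_obs_zero : (σ.snoc b ro).1 0 = σ.1 0 := σ.snoc_obs_castSucc b ro 0

@[simp]
lemma hist_snoc_castSucc (k : Fin m) : (σ.snoc b ro).hist k.castSucc = σ.hist k :=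
  Prod.ext (funext fun i => σ.snoc_obs_castSucc b ro (Fin.castLE _ i))
    (funext fun i => σ.snoc_act_castSucc b ro (Fin.castLE _ i))

@[simp]
lemma hist_snoc_last : (σ.snoc b ro).hist (Fin.last m) = σ.toHist :=
  Prod.ext (funext fun i => σ.snoc_obs_castSucc b ro i)
    (funext fun i => σ.snoc_act_castSucc b ro i)

lemma take_snoc {n : ℕ} (hn : n ≤ m) (hn' : n ≤ m + 1) :
    (σ.snoc b ro).take n hn' = σ.take n hn :=
  Prod.ext (funext fun i => σ.snoc_obs_castSucc b ro (Fin.castLE _ i))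
    (Prod.ext (funext fun i => σ.snoc_act_castSucc b ro (Fin.castLE _ i))
      (funext fun i => σ.snoc_rew_castSucc b ro (Fin.castLE _ i)))

@[simp]
lemma take_snoc_self : (σ.snoc b ro).take m m.le_succ = σ := σ.take_snoc b ro le_rfl _

lemma hist_zero (hm : 0 < m) : σ.hist ⟨0, hm⟩ = initHist (σ.1 0) :=
  Prod.ext (funext fun i => by rw [Fin.fin_one_eq_zero i]; rfl) (funext fun i => i.elim0)

lemma toHist_zero (σ : Traj 𝒪 R 0) : σ.toHist = initHist (σ.1 0) :=
  Prod.ext (funext fun i => by rw [Fin.fin_one_eq_zero i]; rfl) (funext fun i => i.elim0)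

lemma extend_hist {T : ℕ} (τ : Traj 𝒪 R T) (t : Fin T) (ht : (t : ℕ) + 1 < T) :
    (τ.hist t).extend (τ.2.1 t) (τ.1 t.succ) = τ.hist ⟨t + 1, ht⟩ :=
  Prod.ext (Fin.snoc_init_self (τ.hist ⟨t + 1, ht⟩).1) (Fin.snoc_init_self (τ.hist ⟨t + 1, ht⟩).2)

def snocEquiv (m : ℕ) : Traj 𝒪 R m × Bool × (R × 𝒪) ≃ Traj 𝒪 R (m + 1) where
  toFun x := x.1.snoc x.2.1 x.2.2
  invFun τ := (τ.take m m.le_succ, τ.2.1 (Fin.last m), (τ.2.2 (Fin.last m), τ.1 (Fin.last (m + 1))))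
  left_inv := fun ⟨σ, b, ro⟩ => by simp
  right_inv τ := Prod.ext (Fin.snoc_init_self τ.1)
    (Prod.ext (Fin.snoc_init_self τ.2.1) (Fin.snoc_init_self τ.2.2))

lemma sum_snoc [Fintype 𝒪] [Fintype R] (f : Traj 𝒪 R (m + 1) → ℝ) :
    ∑ τ, f τ = ∑ σ : Traj 𝒪 R m, ∑ b, ∑ ro, f (σ.snoc b ro) := by
  rw [← (snocEquiv m).sum_comp, Fintype.sum_prod_type]
  simp only [Fintype.sum_prod_type]
  rfl

end Traj

section TrajProb

variable {𝒪 R : Type} [Fintype 𝒪] [Fintype R] {μ : 𝒪 → ℝ}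
  {q : (t : ℕ) → Hist 𝒪 t → Bool → R × 𝒪 → ℝ} {π : (t : ℕ) → Hist 𝒪 t → Bool → ℝ}

/-- Conditional expectation of `φ (A_t, (R_t, O_{t+1}))` given `H_t = h`. -/
noncomputable def stepExp (π : (t : ℕ) → Hist 𝒪 t → Bool → ℝ)
    (q : (t : ℕ) → Hist 𝒪 t → Bool → R × 𝒪 → ℝ) (t : ℕ) (h : Hist 𝒪 t)
    (φ : Bool → R × 𝒪 → ℝ) : ℝ :=
  ∑ b, π t h b * ∑ ro, q t h b ro * φ b ro

lemma stepExp_const {t : ℕ} {h : Hist 𝒪 t} (hπ : π t h false + π t h true = 1)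
    (hq : ∀ b, ∑ ro, q t h b ro = 1) (c : ℝ) : stepExp π q t h (fun _ _ => c) = c := by
  simp only [stepExp, ← Finset.sum_mul, hq, one_mul, Fintype.sum_bool, add_comm, hπ]

lemma stepExp_const_mul {t : ℕ} (h : Hist 𝒪 t) (c : ℝ) (φ : Bool → R × 𝒪 → ℝ) :
    stepExp π q t h (fun b ro => c * φ b ro) = c * stepExp π q t h φ := by
  simp only [stepExp, Finset.mul_sum, mul_left_comm]

lemma stepExp_ite {t : ℕ} {h : Hist 𝒪 t} (hq : ∀ b, ∑ ro, q t h b ro = 1) (a : Bool) (c : ℝ) :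
    stepExp π q t h (fun b _ => if b = a then c else 0) = π t h a * c := by
  simp [stepExp, ← Finset.sum_mul, hq]

lemma stepExp_globPol (a : Bool) {t : ℕ} (h : Hist 𝒪 t) (φ : Bool → R × 𝒪 → ℝ) :
    stepExp (globPol 𝒪 a) q t h φ = ∑ ro, q t h a ro * φ a ro := by
  cases a <;> simp [stepExp, globPol]

lemma trajProb_snoc {m : ℕ} (σ : Traj 𝒪 R m) (b : Bool) (ro : R × 𝒪) :
    trajProb μ q π (σ.snoc b ro)
      = trajProb μ q π σ * (π m σ.toHist b * q m σ.toHist b ro) := by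
  simp only [trajProb, Fin.prod_univ_castSucc, Fin.val_castSucc, Fin.val_last, Fin.succ_castSucc,
    Fin.succ_last, Traj.snoc_obs_zero, Traj.hist_snoc_castSucc, Traj.hist_snoc_last,
    Traj.snoc_obs_castSucc, Traj.snoc_act_castSucc, Traj.snoc_rew_castSucc, Traj.snoc_obs_last,
    Traj.snoc_act_last, Traj.snoc_rew_last, mul_assoc]

lemma sum_trajProb_snoc {m : ℕ} (Φ : Traj 𝒪 R (m + 1) → ℝ) :
    ∑ τ, trajProb μ q π τ * Φ τ
      = ∑ σ, trajProb μ q π σ * stepExp π q m σ.toHist (fun b ro => Φ (σ.snoc b ro)) := by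
  simp only [Traj.sum_snoc, trajProb_snoc, stepExp, Finset.mul_sum, mul_assoc]

variable {T : ℕ} (hπ : ∀ k < T, ∀ h : Hist 𝒪 k, π k h false + π k h true = 1)
  (hq : ∀ k < T, ∀ (h : Hist 𝒪 k) (b : Bool), ∑ ro, q k h b ro = 1)
include hπ hq

lemma sum_trajProb_take {m : ℕ} (hm : m ≤ T) (G : Traj 𝒪 R m → ℝ) :
    ∑ τ : Traj 𝒪 R T, trajProb μ q π τ * G (τ.take m hm) = ∑ σ, trajProb μ q π σ * G σ := by
  induction T with
  | zero => obtain rfl := Nat.le_zero.mp hm; rfl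
  | succ T ih =>
    rcases hm.lt_or_eq with hm | rfl
    · have hmT : m ≤ T := Nat.le_of_lt_succ hm
      simp only [sum_trajProb_snoc, Traj.take_snoc _ _ _ hmT,
        stepExp_const (hπ T T.lt_succ_self _) (hq T T.lt_succ_self _)]
      exact ih (fun k hk => hπ k (hk.trans T.lt_succ_self))
        (fun k hk => hq k (hk.trans T.lt_succ_self)) hmT
    · rfl

lemma sum_trajProb_step (t : Fin T) (G : Traj 𝒪 R t → ℝ) (φ : Hist 𝒪 t → Bool → R × 𝒪 → ℝ) :
    ∑ τ : Traj 𝒪 R T, trajProb μ q π τ *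
        (G (τ.take t t.isLt.le) * φ (τ.hist t) (τ.2.1 t) (τ.2.2 t, τ.1 t.succ))
      = ∑ σ, trajProb μ q π σ * (G σ * stepExp π q t σ.toHist (φ σ.toHist)) := by
  refine (sum_trajProb_take hπ hq t.isLt fun σ : Traj 𝒪 R (t + 1) =>
    G (σ.take t (t : ℕ).le_succ) * φ (σ.hist (Fin.last t)) (σ.2.1 (Fin.last t))
      (σ.2.2 (Fin.last t), σ.1 (Fin.last (t + 1)))).trans ?_
  rw [sum_trajProb_snoc]
  simp only [Traj.take_snoc_self, Traj.hist_snoc_last, Traj.snoc_act_last, Traj.snoc_rew_last,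
    Traj.snoc_obs_last, Prod.mk.eta, stepExp_const_mul]

end TrajProb

lemma globPol_false_add_true {𝒪 : Type} (a : Bool) {k : ℕ} (h : Hist 𝒪 k) :
    globPol 𝒪 a k h false + globPol 𝒪 a k h true = 1 := by
  cases a <;> simp [globPol]

lemma globPol_nonneg {𝒪 : Type} (a : Bool) {k : ℕ} (h : Hist 𝒪 k) (b : Bool) :
    0 ≤ globPol 𝒪 a k h b := by
  unfold globPol
  split <;> norm_num

lemma trajProb_globPol_eq_zero {𝒪 R : Type} [Fintype 𝒪] [Fintype R] {μ : 𝒪 → ℝ}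
    {q : (t : ℕ) → Hist 𝒪 t → Bool → R × 𝒪 → ℝ} {a : Bool} {m : ℕ} {σ : Traj 𝒪 R m}
    {k : Fin m} (hk : σ.2.1 k ≠ a) : trajProb μ q (globPol 𝒪 a) σ = 0 :=
  mul_eq_zero_of_right _ (Finset.prod_eq_zero (Finset.mem_univ k) (by simp [globPol, hk]))

lemma trajProb_nonneg {𝒪 R : Type} [Fintype 𝒪] [Fintype R] {μ : 𝒪 → ℝ}
    {q : (t : ℕ) → Hist 𝒪 t → Bool → R × 𝒪 → ℝ} {π : (t : ℕ) → Hist 𝒪 t → Bool → ℝ} {m : ℕ}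
    (hμ : ∀ o, 0 ≤ μ o) (hπ : ∀ k < m, ∀ h b, 0 ≤ π k h b)
    (hq : ∀ k < m, ∀ h b ro, 0 ≤ q k h b ro) (σ : Traj 𝒪 R m) : 0 ≤ trajProb μ q π σ :=
  mul_nonneg (hμ _) (Finset.prod_nonneg fun k _ =>
    mul_nonneg (hπ k k.isLt _ _) (hq k k.isLt _ _ _))

lemma sum_trajProb_mul_init {𝒪 R : Type} [Fintype 𝒪] [DecidableEq 𝒪] [Fintype R] (μ : 𝒪 → ℝ)
    (q : (t : ℕ) → Hist 𝒪 t → Bool → R × 𝒪 → ℝ) (π : (t : ℕ) → Hist 𝒪 t → Bool → ℝ) {m : ℕ}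
    (c : 𝒪 → ℝ) (F : Traj 𝒪 R m → ℝ) :
    ∑ σ, trajProb μ q π σ * (c (σ.1 0) * F σ)
      = ∑ o, μ o * c o * ∑ σ, trajProb (fun o' => if o' = o then 1 else 0) q π σ * F σ := by
  simp only [Finset.mul_sum]
  rw [Finset.sum_comm]
  refine Finset.sum_congr rfl fun σ _ => ?_
  simp only [trajProb, ite_mul, one_mul, zero_mul, mul_ite, mul_zero, Finset.sum_ite_eq,
    Finset.mem_univ, if_true]
  ring

section ValueFunction

variable {𝒪 R : Type} [Fintype 𝒪] [Fintype R] {T : ℕ}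
  {q : (t : ℕ) → Hist 𝒪 t → Bool → R × 𝒪 → ℝ} {val : R → ℝ} {a : Bool}

/-- The temporal-difference error `val r + V_{t+1}^a(h, b, o) − V_t^a(h)` of the transition
`(b, (r, o))` out of the history `h`. -/
noncomputable def tdError (T : ℕ) (q : (t : ℕ) → Hist 𝒪 t → Bool → R × 𝒪 → ℝ) (val : R → ℝ)
    (a : Bool) {t : ℕ} (h : Hist 𝒪 t) (b : Bool) (ro : R × 𝒪) : ℝ :=
  val ro.1 + Vfun T q val a (t + 1) (h.extend b ro.2) - Vfun T q val a t h

noncomputable def Traj.tdErrorAt (T : ℕ) (q : (t : ℕ) → Hist 𝒪 t → Bool → R × 𝒪 → ℝ)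
    (val : R → ℝ) (a : Bool) {m : ℕ} (τ : Traj 𝒪 R m) (t : Fin m) : ℝ :=
  tdError T q val a (τ.hist t) (τ.2.1 t) (τ.2.2 t, τ.1 t.succ)

lemma Vfun_of_le {t : ℕ} (ht : T ≤ t) (h : Hist 𝒪 t) : Vfun T q val a t h = 0 := by
  rw [Vfun, Nat.sub_eq_zero_of_le ht, Vaux]

lemma Vfun_of_lt {t : ℕ} (ht : t < T) (h : Hist 𝒪 t) :
    Vfun T q val a t h
      = ∑ ro, q t h a ro * (val ro.1 + Vfun T q val a (t + 1) (h.extend a ro.2)) := by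
  rw [Vfun, show T - t = T - (t + 1) + 1 by omega, Vaux]
  rfl

lemma sum_mul_tdError {t : ℕ} (ht : t < T) {h : Hist 𝒪 t} (hq : ∑ ro, q t h a ro = 1) :
    ∑ ro, q t h a ro * tdError T q val a h a ro = 0 := by
  simp only [tdError, mul_sub, Finset.sum_sub_distrib, ← Finset.sum_mul, hq, one_mul,
    ← Vfun_of_lt ht, sub_self]

lemma tdVar_eq_sum_mul_sq {t : ℕ} (ht : t < T) {h : Hist 𝒪 t} (hq : ∑ ro, q t h a ro = 1) :
    tdVar T q val a t h = ∑ ro, q t h a ro * tdError T q val a h a ro ^ 2 := by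
  change ∑ ro, q t h a ro *
      (tdError T q val a h a ro - ∑ ro', q t h a ro' * tdError T q val a h a ro') ^ 2 = _
  rw [sum_mul_tdError ht hq]
  simp only [sub_zero]

lemma tdVar_nonneg {t : ℕ} {h : Hist 𝒪 t} (hq : ∀ ro, 0 ≤ q t h a ro) :
    0 ≤ tdVar T q val a t h :=
  Finset.sum_nonneg fun ro _ => mul_nonneg (hq ro) (sq_nonneg _)

lemma Traj.sum_tdErrorAt (hT : 0 < T) (τ : Traj 𝒪 R T) :
    ∑ t, τ.tdErrorAt T q val a t = ∑ t, val (τ.2.2 t) - Vfun T q val a 0 (initHist (τ.1 0)) := by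
  set f : ℕ → ℝ := fun n => if hn : n < T then Vfun T q val a n (τ.hist ⟨n, hn⟩) else 0
  have hstep (t : Fin T) : τ.tdErrorAt T q val a t = val (τ.2.2 t) + (f (t + 1) - f t) := by
    have hnext : Vfun T q val a (t + 1) ((τ.hist t).extend (τ.2.1 t) (τ.1 t.succ)) = f (t + 1) := by
      by_cases ht : (t : ℕ) + 1 < T
      · simp only [f, dif_pos ht, τ.extend_hist t ht]
      · simp only [f, dif_neg ht, Vfun_of_le (not_lt.mp ht)]
    rw [Traj.tdErrorAt, tdError, hnext]
    simp only [f, dif_pos t.isLt]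
    ring
  rw [Finset.sum_congr rfl fun t _ => hstep t, Finset.sum_add_distrib,
    Fin.sum_univ_eq_sum_range (fun n => f (n + 1) - f n), Finset.sum_range_sub]
  simp only [f, lt_irrefl, dif_neg, not_false_eq_true, dif_pos hT, τ.hist_zero hT]
  ring

end ValueFunction

section TotalVariance

lemma sstarSq_eq_sum {𝒪 R : Type} [Fintype 𝒪] [DecidableEq 𝒪] [Fintype R] {T : ℕ}
    {q : (t : ℕ) → Hist 𝒪 t → Bool → R × 𝒪 → ℝ} {val : R → ℝ} {a : Bool} (o : 𝒪) :
    sstarSq T q val o a = ∑ τ : Traj 𝒪 R T,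
      trajProb (fun o' => if o' = o then 1 else 0) q (globPol 𝒪 a) τ *
        (∑ t, val (τ.2.2 t) - Vfun T q val a 0 (initHist (τ.1 0))) ^ 2 := by
  refine Finset.sum_congr rfl fun τ _ => ?_
  by_cases h0 : τ.1 0 = o
  · rw [h0]
  · simp [trajProb, h0]

variable {𝒪 R : Type} [Fintype 𝒪] [Fintype R] {T : ℕ}
  {q : (t : ℕ) → Hist 𝒪 t → Bool → R × 𝒪 → ℝ} {val : R → ℝ} {a : Bool} {ν : 𝒪 → ℝ}
  (hq : ∀ k < T, ∀ (h : Hist 𝒪 k) (b : Bool), ∑ ro, q k h b ro = 1)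
include hq

lemma sum_trajProb_globPol_mul_tdErrorAt_sq (t : Fin T) :
    ∑ τ : Traj 𝒪 R T, trajProb ν q (globPol 𝒪 a) τ * τ.tdErrorAt T q val a t ^ 2
      = ∑ σ : Traj 𝒪 R t, trajProb ν q (globPol 𝒪 a) σ * tdVar T q val a t σ.toHist := by
  have h := sum_trajProb_step (μ := ν) (fun _ _ => globPol_false_add_true a) hq t (fun _ => 1)
    (fun h b ro => tdError T q val a h b ro ^ 2)
  simp only [one_mul, stepExp_globPol] at h
  simp only [Traj.tdErrorAt, h, tdVar_eq_sum_mul_sq t.isLt (hq t t.isLt _ a)]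

-- The earlier error is a function of `H_t`, and the later one has conditional mean zero given
-- `H_t` by the Bellman equation.
lemma sum_trajProb_globPol_mul_tdErrorAt_mul_eq_zero {s t : Fin T} (hst : s < t) :
    ∑ τ : Traj 𝒪 R T, trajProb ν q (globPol 𝒪 a) τ *
      (τ.tdErrorAt T q val a s * τ.tdErrorAt T q val a t) = 0 := by
  refine (sum_trajProb_step (fun _ _ => globPol_false_add_true a) hq t
    (fun σ => σ.tdErrorAt T q val a ⟨s, hst⟩) (tdError T q val a)).trans ?_
  simp only [stepExp_globPol, sum_mul_tdError t.isLt (hq t t.isLt _ a), mul_zero,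
    Finset.sum_const_zero]

lemma sum_sum_trajProb_globPol_mul_tdVar (hT : 0 < T) :
    ∑ t : Fin T, ∑ σ : Traj 𝒪 R t, trajProb ν q (globPol 𝒪 a) σ * tdVar T q val a t σ.toHist
      = ∑ τ : Traj 𝒪 R T, trajProb ν q (globPol 𝒪 a) τ *
          (∑ t, val (τ.2.2 t) - Vfun T q val a 0 (initHist (τ.1 0))) ^ 2 := by
  have horth (s t : Fin T) (hst : s ≠ t) : ∑ τ : Traj 𝒪 R T, trajProb ν q (globPol 𝒪 a) τ *
      (τ.tdErrorAt T q val a s * τ.tdErrorAt T q val a t) = 0 := by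
    rcases lt_or_gt_of_ne hst with h | h
    · exact sum_trajProb_globPol_mul_tdErrorAt_mul_eq_zero hq h
    · simp only [mul_comm (Traj.tdErrorAt _ _ _ _ _ s)]
      exact sum_trajProb_globPol_mul_tdErrorAt_mul_eq_zero hq h
  calc ∑ t : Fin T, ∑ σ : Traj 𝒪 R t, trajProb ν q (globPol 𝒪 a) σ * tdVar T q val a t σ.toHist
      = ∑ s, ∑ t, ∑ τ : Traj 𝒪 R T, trajProb ν q (globPol 𝒪 a) τ *
          (τ.tdErrorAt T q val a s * τ.tdErrorAt T q val a t) := by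
        refine Finset.sum_congr rfl fun s _ => ?_
        rw [Finset.sum_eq_single s (fun t _ hts => horth s t hts.symm) (by simp),
          ← sum_trajProb_globPol_mul_tdErrorAt_sq hq s]
        simp only [sq]
    _ = _ := by
        simp only [← Traj.sum_tdErrorAt hT, sq, Finset.sum_mul_sum]
        simp only [Finset.mul_sum]
        rw [eq_comm, Finset.sum_comm]
        exact Finset.sum_congr rfl fun s _ => Finset.sum_comm

lemma sum_sum_trajProb_globPol_mul_init_mul_tdVar [DecidableEq 𝒪] (hT : 0 < T) (μ : 𝒪 → ℝ)
    (c : 𝒪 → ℝ) :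
    ∑ t : Fin T, ∑ σ : Traj 𝒪 R t,
        trajProb μ q (globPol 𝒪 a) σ * (c (σ.1 0) * tdVar T q val a t σ.toHist)
      = ∑ o, μ o * c o * sstarSq T q val o a := by
  simp only [sum_trajProb_mul_init]
  rw [Finset.sum_comm]
  simp only [← Finset.mul_sum, sum_sum_trajProb_globPol_mul_tdVar hq hT, sstarSq_eq_sum]

end TotalVariance

lemma Fin.prod_ite_val_le {M : Type*} [CommMonoid M] {T : ℕ} (t : Fin T) (f : Fin T → M) :
    ∏ k : Fin T, (if (k : ℕ) ≤ t then f k else 1)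
      = (∏ k : Fin t, f (Fin.castLE t.isLt.le k)) * f t := by
  rw [← Finset.prod_filter]
  refine .trans ?_ (Fin.prod_univ_castSucc fun k : Fin ((t : ℕ) + 1) => f (Fin.castLE t.isLt k))
  exact Finset.prod_bij' (fun k hk => ⟨k, Nat.lt_succ_of_le (Finset.mem_filter.mp hk).2⟩)
    (fun k _ => Fin.castLE t.isLt k) (fun _ _ => Finset.mem_univ _)
    (fun k _ => Finset.mem_filter.mpr ⟨Finset.mem_univ _, Nat.le_of_lt_succ k.isLt⟩)
    (fun _ _ => rfl) (fun _ _ => rfl) (fun _ _ => rfl)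

/-- The importance weight `Π_{k ≤ t} 1(A_k = a) / π_k(a | H_k)` of a length-`t` trajectory
followed by the action `A_t = a`. -/
noncomputable def isWeight {𝒪 R : Type} (πb : (t : ℕ) → Hist 𝒪 t → Bool → ℝ) (a : Bool) {t : ℕ}
    (σ : Traj 𝒪 R t) : ℝ :=
  (πb t σ.toHist a)⁻¹ * ∏ k, if σ.2.1 k = a then (πb k (σ.hist k) a)⁻¹ else 0

section ImportanceWeight

variable {𝒪 R : Type} [Fintype 𝒪] [Fintype R] {μ : 𝒪 → ℝ}
  {q : (t : ℕ) → Hist 𝒪 t → Bool → R × 𝒪 → ℝ} {πb : (t : ℕ) → Hist 𝒪 t → Bool → ℝ} {a : Bool}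

lemma trajProb_mul_prod_inv_sq {m : ℕ} (σ : Traj 𝒪 R m) :
    trajProb μ q πb σ * ∏ k, (if σ.2.1 k = a then (πb k (σ.hist k) a ^ 2)⁻¹ else 0)
      = trajProb μ q (globPol 𝒪 a) σ *
          ∏ k, (if σ.2.1 k = a then (πb k (σ.hist k) a)⁻¹ else 0) := by
  simp only [trajProb, mul_assoc, ← Finset.prod_mul_distrib]
  congr 2 with k
  by_cases hk : σ.2.1 k = a
  · simp only [globPol, hk, if_true]
    grind
  · simp [hk]

lemma isTerm_eq_sum {T : ℕ} (val : R → ℝ)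
    (hπ : ∀ k < T, ∀ h : Hist 𝒪 k, πb k h false + πb k h true = 1)
    (hq : ∀ k < T, ∀ (h : Hist 𝒪 k) (b : Bool), ∑ ro, q k h b ro = 1) (t : Fin T) :
    isTerm T μ q val πb a t = ∑ σ : Traj 𝒪 R t,
      trajProb μ q (globPol 𝒪 a) σ * (tdVar T q val a t σ.toHist * isWeight πb a σ) := by
  set w : Traj 𝒪 R t → ℝ :=
    fun σ => ∏ k, if σ.2.1 k = a then (πb k (σ.hist k) a ^ 2)⁻¹ else 0 with hw
  have hstep (h : Hist 𝒪 t) : stepExp πb q t h (fun b _ => if b = a then (πb t h a ^ 2)⁻¹ else 0)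
      = (πb t h a)⁻¹ := by
    rw [stepExp_ite (hq t t.isLt h)]
    grind
  calc isTerm T μ q val πb a t
      = ∑ τ : Traj 𝒪 R T, trajProb μ q πb τ *
          ((tdVar T q val a t (τ.take t t.isLt.le).toHist * w (τ.take t t.isLt.le)) *
            (if τ.2.1 t = a then (πb t (τ.hist t) a ^ 2)⁻¹ else 0)) := by
        refine Finset.sum_congr rfl fun τ _ => ?_
        simp only [Fin.prod_ite_val_le, mul_assoc]
        rfl
    _ = ∑ σ : Traj 𝒪 R t, (trajProb μ q πb σ * w σ) *
          (tdVar T q val a t σ.toHist * (πb t σ.toHist a)⁻¹) := by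
        refine (sum_trajProb_step hπ hq t (fun σ => tdVar T q val a t σ.toHist * w σ)
          fun h b _ => if b = a then (πb t h a ^ 2)⁻¹ else 0).trans ?_
        simp only [hstep]
        exact Finset.sum_congr rfl fun σ _ => by ring
    _ = _ := by
        simp only [hw, trajProb_mul_prod_inv_sq, isWeight]
        exact Finset.sum_congr rfl fun σ _ => by ring

end ImportanceWeight

lemma inv_le_isWeight {𝒪 R : Type} {πb : (t : ℕ) → Hist 𝒪 t → Bool → ℝ} {a : Bool} {t : ℕ}
    (hπ : ∀ k ≤ t, ∀ h, 0 < πb k h a ∧ πb k h a ≤ 1) (σ : Traj 𝒪 R t)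
    (hσ : ∀ k, σ.2.1 k = a) : (πb 0 (initHist (σ.1 0)) a)⁻¹ ≤ isWeight πb a σ := by
  have hone (k : ℕ) (hk : k ≤ t) (h : Hist 𝒪 k) : 1 ≤ (πb k h a)⁻¹ :=
    (one_le_inv₀ (hπ k hk h).1).mpr (hπ k hk h).2
  simp only [isWeight, hσ, if_true]
  cases t with
  | zero => simp [σ.toHist_zero]
  | succ n =>
    rw [Fin.prod_univ_succ, ← σ.hist_zero n.succ_pos]
    have h0 : 0 ≤ (πb 0 (σ.hist 0) a)⁻¹ := (inv_pos.mpr (hπ 0 (Nat.zero_le _) _).1).le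
    have hrest : 1 ≤ ∏ k : Fin n, (πb k.succ (σ.hist k.succ) a)⁻¹ :=
      Finset.one_le_prod fun k _ => hone _ (by omega) _
    exact (le_mul_of_one_le_right h0 hrest).trans
      (le_mul_of_one_le_left (mul_nonneg h0 (zero_le_one.trans hrest)) (hone _ le_rfl _))

section OptimalDesign

variable {𝒪 R : Type} [Fintype 𝒪] [DecidableEq 𝒪] [Fintype R] {T : ℕ}
  {q : (t : ℕ) → Hist 𝒪 t → Bool → R × 𝒪 → ℝ} {val : R → ℝ}

lemma piStar_zero (o : 𝒪) (b : Bool) :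
    piStar T q val 0 (initHist o) b = Real.sqrt (sstarSq T q val o b) /
      (Real.sqrt (sstarSq T q val o false) + Real.sqrt (sstarSq T q val o true)) := rfl

lemma piStar_false_add_true (hs : ∀ o b, 0 < Real.sqrt (sstarSq T q val o b)) {k : ℕ}
    (h : Hist 𝒪 k) : piStar T q val k h false + piStar T q val k h true = 1 := by
  rcases k with _ | k
  · rw [piStar, dif_pos rfl, piStar, dif_pos rfl, ← add_div,
      div_self (add_pos (hs _ false) (hs _ true)).ne']
  · rw [piStar, dif_neg k.succ_ne_zero, piStar, dif_neg k.succ_ne_zero]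
    cases h.2 ⟨0, k.succ_pos⟩ <;> simp

lemma isWeight_piStar {t : ℕ} (σ : Traj 𝒪 R t) {a : Bool} (hσ : ∀ k, σ.2.1 k = a) :
    isWeight (piStar T q val) a σ = (piStar T q val 0 (initHist (σ.1 0)) a)⁻¹ := by
  have hrepeat {k : ℕ} (hk : k ≠ 0) (h : Hist 𝒪 k) (ha : h.2 ⟨0, Nat.pos_of_ne_zero hk⟩ = a) :
      piStar T q val k h a = 1 := by
    simp [piStar, hk, ha]
  simp only [isWeight, hσ, if_true]
  cases t with
  | zero => simp [σ.toHist_zero]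
  | succ n =>
    have htail : ∏ k : Fin n, (piStar T q val k.succ (σ.hist k.succ) a)⁻¹ = 1 :=
      Finset.prod_eq_one fun k _ => by
        rw [hrepeat (Fin.val_ne_of_ne k.succ_ne_zero) (σ.hist k.succ) (hσ 0), inv_one]
    rw [hrepeat n.succ_ne_zero σ.toHist (hσ 0), Fin.prod_univ_succ, htail,
      ← σ.hist_zero n.succ_pos]
    simp

end OptimalDesign

section Aggregate

variable {𝒪 R : Type} [Fintype 𝒪] [DecidableEq 𝒪] [Fintype R] {T : ℕ} {μ : 𝒪 → ℝ}
  {q : (t : ℕ) → Hist 𝒪 t → Bool → R × 𝒪 → ℝ} {val : R → ℝ}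
  {πb : (t : ℕ) → Hist 𝒪 t → Bool → ℝ}

lemma sum_mul_sum_inv_mul_sstarSq (hT : 0 < T)
    (hq : ∀ k < T, ∀ (h : Hist 𝒪 k) (b : Bool), ∑ ro, q k h b ro = 1) :
    ∑ o, μ o * ∑ a, (πb 0 (initHist o) a)⁻¹ * sstarSq T q val o a
      = ∑ a, ∑ t : Fin T, ∑ σ : Traj 𝒪 R t, trajProb μ q (globPol 𝒪 a) σ *
          ((πb 0 (initHist (σ.1 0)) a)⁻¹ * tdVar T q val a t σ.toHist) := by
  calc ∑ o, μ o * ∑ a, (πb 0 (initHist o) a)⁻¹ * sstarSq T q val o a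
      = ∑ a, ∑ o, μ o * (πb 0 (initHist o) a)⁻¹ * sstarSq T q val o a := by
        simp only [Finset.mul_sum, mul_assoc]
        exact Finset.sum_comm
    _ = _ := Finset.sum_congr rfl fun a _ =>
        (sum_sum_trajProb_globPol_mul_init_mul_tdVar hq hT μ _).symm

lemma sum_mul_sum_inv_mul_sstarSq_le_sum_isTerm (hT : 0 < T) (hμ : ∀ o, 0 ≤ μ o)
    (hqnn : ∀ k < T, ∀ h b ro, 0 ≤ q k h b ro)
    (hq : ∀ k < T, ∀ (h : Hist 𝒪 k) (b : Bool), ∑ ro, q k h b ro = 1)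
    (hpos : ∀ k < T, ∀ h b, 0 < πb k h b)
    (hπ : ∀ k < T, ∀ h : Hist 𝒪 k, πb k h false + πb k h true = 1) :
    ∑ o, μ o * ∑ a, (πb 0 (initHist o) a)⁻¹ * sstarSq T q val o a
      ≤ ∑ a, ∑ t, isTerm T μ q val πb a t := by
  rw [sum_mul_sum_inv_mul_sstarSq hT hq]
  simp only [isTerm_eq_sum val hπ hq]
  refine Finset.sum_le_sum fun a _ => Finset.sum_le_sum fun t _ => Finset.sum_le_sum fun σ _ => ?_
  by_cases hσ : ∀ k, σ.2.1 k = a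
  · have hle1 (k : ℕ) (hk : k < T) (h : Hist 𝒪 k) : πb k h a ≤ 1 := by
      have := hπ k hk h
      cases a <;> linarith [hpos k hk h false, hpos k hk h true]
    rw [mul_comm (tdVar _ _ _ _ _ _)]
    refine mul_le_mul_of_nonneg_left (mul_le_mul_of_nonneg_right ?_ (tdVar_nonneg ?_)) ?_
    · exact inv_le_isWeight (fun k hk h => ⟨hpos k (by omega) h a, hle1 k (by omega) h⟩) σ hσ
    · exact fun ro => hqnn t t.isLt _ a ro
    · exact trajProb_nonneg hμ (fun k _ => globPol_nonneg a) (fun k hk => hqnn k (by omega)) σ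
  · obtain ⟨k, hk⟩ := not_forall.mp hσ
    simp [trajProb_globPol_eq_zero hk]

lemma sum_isTerm_piStar (hT : 0 < T)
    (hq : ∀ k < T, ∀ (h : Hist 𝒪 k) (b : Bool), ∑ ro, q k h b ro = 1)
    (hs : ∀ o b, 0 < Real.sqrt (sstarSq T q val o b)) :
    ∑ a, ∑ t, isTerm T μ q val (piStar T q val) a t
      = ∑ o, μ o * ∑ a, (piStar T q val 0 (initHist o) a)⁻¹ * sstarSq T q val o a := by
  rw [sum_mul_sum_inv_mul_sstarSq hT hq]
  simp only [isTerm_eq_sum val (fun k _ => piStar_false_add_true hs) hq]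
  refine Finset.sum_congr rfl fun a _ => Finset.sum_congr rfl fun t _ =>
    Finset.sum_congr rfl fun σ _ => ?_
  by_cases hσ : ∀ k, σ.2.1 k = a
  · rw [isWeight_piStar σ hσ, mul_comm (tdVar _ _ _ _ _ _)]
  · obtain ⟨k, hk⟩ := not_forall.mp hσ
    simp [trajProb_globPol_eq_zero hk]

end Aggregate

lemma sq_sum_le_sum_inv_mul_sq {ι : Type*} [Fintype ι] {p : ι → ℝ} (hp : ∀ i, 0 < p i)
    (hp1 : ∑ i, p i = 1) (s : ι → ℝ) : (∑ i, s i) ^ 2 ≤ ∑ i, (p i)⁻¹ * s i ^ 2 := by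
  simpa only [hp1, div_one, div_eq_inv_mul, inv_one, one_mul] using
    Finset.sq_sum_div_le_sum_sq_div Finset.univ s fun i _ => hp i

lemma sum_inv_mul_sq_of_proportional {ι : Type*} [Fintype ι] {s : ι → ℝ} (hs : ∀ i, 0 < s i) :
    ∑ i, (s i / ∑ j, s j)⁻¹ * s i ^ 2 = (∑ i, s i) ^ 2 := by
  have hterm (i : ι) : (s i / ∑ j, s j)⁻¹ * s i ^ 2 = (∑ j, s j) * s i := by
    field_simp [(hs i).ne']
  rw [Finset.sum_congr rfl fun i _ => hterm i, ← Finset.mul_sum, sq]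

theorem nmdp_optimal_design_general {𝒪 : Type} [Fintype 𝒪] [DecidableEq 𝒪]
    (T : ℕ) (hT : 1 ≤ T) (ℛ : Finset ℝ)
    (μ : 𝒪 → ℝ) (hμ : ∀ o, 0 ≤ μ o)
    (q : (t : ℕ) → Hist 𝒪 t → Bool → ↥ℛ × 𝒪 → ℝ)
    (hqnn : ∀ t, t < T → ∀ (h : Hist 𝒪 t) (a : Bool) (ro : ↥ℛ × 𝒪), 0 ≤ q t h a ro)
    (hqsum : ∀ t, t < T → ∀ (h : Hist 𝒪 t) (a : Bool), ∑ ro : ↥ℛ × 𝒪, q t h a ro = 1)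
    (hs : ∀ (o : 𝒪) (a : Bool),
      0 < Real.sqrt (sstarSq T q (Subtype.val : ↥ℛ → ℝ) o a)) :
    (∀ πb : (t : ℕ) → Hist 𝒪 t → Bool → ℝ,
      (∀ t, t < T → ∀ (h : Hist 𝒪 t) (a : Bool), 0 < πb t h a) →
      (∀ t, t < T → ∀ h : Hist 𝒪 t, πb t h false + πb t h true = 1) →
      ((T : ℝ) ^ 2)⁻¹ * (∑ o : 𝒪, μ o *
            (Real.sqrt (sstarSq T q (Subtype.val : ↥ℛ → ℝ) o false)
              + Real.sqrt (sstarSq T q (Subtype.val : ↥ℛ → ℝ) o true)) ^ 2)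
          + ((T : ℝ) ^ 2)⁻¹ * varInit T μ q (Subtype.val : ↥ℛ → ℝ)
        ≤ EB1 T μ q (Subtype.val : ↥ℛ → ℝ) πb) ∧
    EB1 T μ q (Subtype.val : ↥ℛ → ℝ) (piStar T q (Subtype.val : ↥ℛ → ℝ))
      = ((T : ℝ) ^ 2)⁻¹ * (∑ o : 𝒪, μ o *
            (Real.sqrt (sstarSq T q (Subtype.val : ↥ℛ → ℝ) o false)
              + Real.sqrt (sstarSq T q (Subtype.val : ↥ℛ → ℝ) o true)) ^ 2)
          + ((T : ℝ) ^ 2)⁻¹ * varInit T μ q (Subtype.val : ↥ℛ → ℝ) := by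
  have hsq (o : 𝒪) (a : Bool) : Real.sqrt (sstarSq T q Subtype.val o a) ^ 2
      = sstarSq T q Subtype.val o a :=
    Real.sq_sqrt (Real.sqrt_pos.mp (hs o a)).le
  have hsqrt_sum (o : 𝒪) : Real.sqrt (sstarSq T q Subtype.val o false)
      + Real.sqrt (sstarSq T q Subtype.val o true)
      = ∑ a, Real.sqrt (sstarSq T q Subtype.val o a) := by
    rw [Fintype.sum_bool, add_comm]
  refine ⟨fun πb hpos hsum => ?_, ?_⟩
  · rw [EB1]
    gcongr
    refine le_trans (Finset.sum_le_sum fun o _ => mul_le_mul_of_nonneg_left ?_ (hμ o))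
      (sum_mul_sum_inv_mul_sstarSq_le_sum_isTerm hT hμ hqnn hqsum hpos hsum)
    have hπ1 : ∑ a, πb 0 (initHist o) a = 1 := by rw [Fintype.sum_bool, add_comm, hsum 0 hT]
    rw [hsqrt_sum]
    simpa only [hsq] using sq_sum_le_sum_inv_mul_sq (hpos 0 hT (initHist o)) hπ1
      fun a => Real.sqrt (sstarSq T q Subtype.val o a)
  · rw [EB1, sum_isTerm_piStar hT hqsum hs]
    congr 2
    refine Finset.sum_congr rfl fun o _ => ?_
    simp only [piStar_zero, hsqrt_sum]
    rw [← sum_inv_mul_sq_of_proportional (hs o)]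
    simp only [hsq]

/-- **Theorem 1 of the paper (tabular non-Markov decision process).**
For every everywhere-positive behavior policy `π^b`,
`EB₁(π^b) ≥ T⁻² E_{O₁∼μ}[(σ_*(O₁,0) + σ_*(O₁,1))²] + T⁻² Var_{O₁∼μ}(V₁¹(O₁) − V₁⁰(O₁))`,
and equality holds for the design `π^{b*}` that randomizes the initial action with
probabilities `σ_*(o₁,a)/(σ_*(o₁,0)+σ_*(o₁,1))` and then repeats the initial action at
all later times.  Rewards take values in the finite alphabet `ℛ ⊂ ℝ` (encoded as the
subtype `↥ℛ` with embedding `Subtype.val`). -/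
theorem nmdp_optimal_design {𝒪 : Type} [Fintype 𝒪] [DecidableEq 𝒪] [Nonempty 𝒪]
    (T : ℕ) (hT : 1 ≤ T) (ℛ : Finset ℝ)
    (μ : 𝒪 → ℝ) (hμ : ∀ o, 0 ≤ μ o) (hμ1 : ∑ o : 𝒪, μ o = 1)
    (q : (t : ℕ) → Hist 𝒪 t → Bool → ↥ℛ × 𝒪 → ℝ)
    (hqnn : ∀ t, t < T → ∀ (h : Hist 𝒪 t) (a : Bool) (ro : ↥ℛ × 𝒪), 0 ≤ q t h a ro)
    (hqsum : ∀ t, t < T → ∀ (h : Hist 𝒪 t) (a : Bool), ∑ ro : ↥ℛ × 𝒪, q t h a ro = 1)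
    (hs : ∀ (o : 𝒪) (a : Bool),
      0 < Real.sqrt (sstarSq T q (Subtype.val : ↥ℛ → ℝ) o a)) :
    (∀ πb : (t : ℕ) → Hist 𝒪 t → Bool → ℝ,
      (∀ t, t < T → ∀ (h : Hist 𝒪 t) (a : Bool), 0 < πb t h a) →
      (∀ t, t < T → ∀ h : Hist 𝒪 t, πb t h false + πb t h true = 1) →
      ((T : ℝ) ^ 2)⁻¹ * (∑ o : 𝒪, μ o *
            (Real.sqrt (sstarSq T q (Subtype.val : ↥ℛ → ℝ) o false)
              + Real.sqrt (sstarSq T q (Subtype.val : ↥ℛ → ℝ) o true)) ^ 2)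
          + ((T : ℝ) ^ 2)⁻¹ * varInit T μ q (Subtype.val : ↥ℛ → ℝ)
        ≤ EB1 T μ q (Subtype.val : ↥ℛ → ℝ) πb) ∧
    EB1 T μ q (Subtype.val : ↥ℛ → ℝ) (piStar T q (Subtype.val : ↥ℛ → ℝ))
      = ((T : ℝ) ^ 2)⁻¹ * (∑ o : 𝒪, μ o *
            (Real.sqrt (sstarSq T q (Subtype.val : ↥ℛ → ℝ) o false)
              + Real.sqrt (sstarSq T q (Subtype.val : ↥ℛ → ℝ) o true)) ^ 2)
          + ((T : ℝ) ^ 2)⁻¹ * varInit T μ q (Subtype.val : ↥ℛ → ℝ) :=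
  nmdp_optimal_design_general T hT ℛ μ hμ q hqnn hqsum hs
end

section
/- Fix a finite nonempty observation set 𝒪, an integer horizon T ≥ 1, actions in {0,1}, and a finite reward alphabet ℛ ⊂ ℝ, with initial distribution μ on 𝒪 and, for each t, history h_t = (o_1, a_1, …, o_t) and action a_t, a probability mass function q_t(·, · | h_t, a_t) on ℛ × 𝒪 specifying jointly the reward R_t and the next observation O_{t+1}. For a ∈ {0,1}, let E^a denote expectation under the process with O_1 ~ μ and A_t = a for all t, define V_t^a(h_t) = E^a[Σ_{k=t}^T R_k | H_t = h_t] with V_{T+1}^a ≡ 0, σ_t²(h_t, a) = Var(R_t + V_{t+1}^a(H_{t+1}) − V_t^a(h_t) | H_t = h_t, A_t = a), and σ_*²(o, a) = E^a[(Σ_{t=1}^T R_t − V_1^a(o))² | O_1 = o]. Let π^b be the behavior policy that draws A_1 given O_1 = o with probability p(o) ∈ (0,1) of A_1 = 1 and sets A_t = A_1 for all t ≥ 2 (so π_t^b(A_1 | H_t) = 1 for t ≥ 2). Then, with the convention that a summand is 0 on the event that A_k ≠ a for some k ≤ t, Σ_{a∈{0,1}} Σ_{t=1}^T E^{π^b}[σ_t²(H_t,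 a) Π_{k≤t} 1(A_k = a)/π_k^b(a | H_k)²] = E_{O_1∼μ}[σ_*²(O_1, 1)/p(O_1) + σ_*²(O_1, 0)/(1 − p(O_1))]. -/
open Finset

/-- A behavior policy in the restricted class `Π^b`: draw `A₁ = 1` with probability
`p(O₁)` given the initial observation `O₁`, and deterministically repeat the initial
action at all later times. -/
noncomputable def classPol (𝒪 : Type) (p : 𝒪 → ℝ) : (t : ℕ) → Hist 𝒪 t → Bool → ℝ :=
  fun t h b =>
    if ht : t = 0 then (if b then p (h.1 0) else 1 - p (h.1 0))
    else if b = h.2 ⟨0, Nat.pos_of_ne_zero ht⟩ then 1 else 0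


/-!
Under a design in `Π^b` only trajectories whose actions all equal the initial one have positive
probability, and along them every importance weight after the first equals one. Hence the
`(a, t)` term is `E_{O₁∼μ}[E^a[σ_t²(H_t, a) | O₁] / π₁^b(a | O₁)]`, and it remains to see that
`Σ_t E^a[σ_t²(H_t, a) | O₁ = o] = σ_*²(o, a)`. This is the law of total variance, one stage at
a time: conditioning on the first reward and the next observation splits the conditional
variance of the cumulative reward into the variance of the first temporal-difference error and
the expected conditional variance of the remaining cumulative reward, which is the same
quantity for the process started one step later; induct on the horizon.
-/

abbrev TransKernel (𝒪 R : Type) : Type := (t : ℕ) → Hist 𝒪 t → Bool → R × 𝒪 → ℝ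

section Shift

variable {𝒪 R : Type}

def Hist.cons {t : ℕ} (o : 𝒪) (a : Bool) (h : Hist 𝒪 t) : Hist 𝒪 (t + 1) :=
  (Fin.cons o h.1, Fin.cons a h.2)

theorem Hist.cons_extend {t : ℕ} (o : 𝒪) (a b : Bool) (h : Hist 𝒪 t) (o' : 𝒪) :
    Hist.cons o a (h.extend b o') = (Hist.cons o a h).extend b o' := by
  simp only [Hist.cons, Hist.extend, Fin.cons_snoc_eq_snoc_cons]

theorem initHist_extend (o o' : 𝒪) (a : Bool) :
    (initHist o).extend a o' = Hist.cons o a (initHist o') := by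
  refine Prod.ext (funext fun i => ?_) (funext fun i => ?_) <;> fin_cases i <;> rfl

/-- The kernel of the process after time `0`, given `O₁ = o` and `A₁ = a`, re-indexed to
start again at time `0`. -/
def qShift (q : TransKernel 𝒪 R) (o : 𝒪) (a : Bool) : TransKernel 𝒪 R :=
  fun t h => q (t + 1) (Hist.cons o a h)

end Shift

section ValueFunctions

variable {𝒪 R : Type} [Fintype 𝒪] [Fintype R] (q : TransKernel 𝒪 R) (val : R → ℝ)

def IsNormalized (T : ℕ) (q : TransKernel 𝒪 R) : Prop :=
  ∀ t, t < T → ∀ (h : Hist 𝒪 t) (a : Bool), ∑ ro : R × 𝒪, q t h a ro = 1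

theorem IsNormalized.qShift {T : ℕ} {q : TransKernel 𝒪 R} (hq : IsNormalized (T + 1) q)
    (o : 𝒪) (a : Bool) : IsNormalized T (qShift q o a) :=
  fun t ht _ b => hq (t + 1) (Nat.succ_lt_succ ht) _ b

theorem Vaux_cons (o : 𝒪) (a : Bool) :
    ∀ (k t : ℕ) (h : Hist 𝒪 t),
      Vaux q val a k (t + 1) (Hist.cons o a h) = Vaux (qShift q o a) val a k t h
  | 0, _, _ => rfl
  | k + 1, t, h => by
    simp only [Vaux]
    refine sum_congr rfl fun ro _ => ?_
    rw [← Hist.cons_extend, Vaux_cons o a k (t + 1)]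
    rfl

theorem Vfun_cons (T : ℕ) (o : 𝒪) (a : Bool) (t : ℕ) (h : Hist 𝒪 t) :
    Vfun (T + 1) q val a (t + 1) (Hist.cons o a h) = Vfun T (qShift q o a) val a t h := by
  unfold Vfun
  rw [Nat.add_sub_add_right, Vaux_cons]

theorem tdVar_cons (T : ℕ) (o : 𝒪) (a : Bool) (t : ℕ) (h : Hist 𝒪 t) :
    tdVar (T + 1) q val a (t + 1) (Hist.cons o a h) = tdVar T (qShift q o a) val a t h := by
  simp only [tdVar, ← Hist.cons_extend, Vfun_cons]
  rfl

theorem Vfun_eq_sum {T t : ℕ} (ht : t < T) (a : Bool) (h : Hist 𝒪 t) :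
    Vfun T q val a t h
      = ∑ ro : R × 𝒪, q t h a ro * (val ro.1 + Vfun T q val a (t + 1) (h.extend a ro.2)) := by
  obtain ⟨k, hk⟩ : ∃ k, T - t = k + 1 := ⟨T - t - 1, by omega⟩
  unfold Vfun
  rw [hk, show T - (t + 1) = k by omega, Vaux]

theorem Vfun_initHist_succ (T : ℕ) (a : Bool) (o : 𝒪) :
    Vfun (T + 1) q val a 0 (initHist o)
      = ∑ ro : R × 𝒪, q 0 (initHist o) a ro *
          (val ro.1 + Vfun T (qShift q o a) val a 0 (initHist ro.2)) := by
  simp only [Vfun_eq_sum q val (Nat.succ_pos T), initHist_extend, Vfun_cons]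

/-- By the Bellman equation the temporal-difference error has conditional mean zero. -/
theorem tdVar_eq_sum_sq {T t : ℕ} (ht : t < T) (a : Bool) (h : Hist 𝒪 t)
    (hq : ∑ ro : R × 𝒪, q t h a ro = 1) :
    tdVar T q val a t h = ∑ ro : R × 𝒪, q t h a ro *
      (val ro.1 + Vfun T q val a (t + 1) (h.extend a ro.2) - Vfun T q val a t h) ^ 2 := by
  have hmean : ∑ ro : R × 𝒪, q t h a ro *
      (val ro.1 + Vfun T q val a (t + 1) (h.extend a ro.2) - Vfun T q val a t h) = 0 := by
    simp only [mul_sub, sum_sub_distrib, ← sum_mul, hq, ← Vfun_eq_sum q val ht, one_mul,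
      sub_self]
  simp only [tdVar, hmean, sub_zero]

theorem tdVar_initHist_succ {T : ℕ} (hq : IsNormalized (T + 1) q) (a : Bool) (o : 𝒪) :
    tdVar (T + 1) q val a 0 (initHist o)
      = ∑ ro : R × 𝒪, q 0 (initHist o) a ro *
          (val ro.1 + Vfun T (qShift q o a) val a 0 (initHist ro.2)
            - Vfun (T + 1) q val a 0 (initHist o)) ^ 2 := by
  rw [tdVar_eq_sum_sq q val (Nat.succ_pos T) a _ (hq 0 (Nat.succ_pos T) _ a)]
  simp only [initHist_extend, Vfun_cons]

end ValueFunctions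

section ForcedPaths

variable {𝒪 R : Type}

def pathHist {T : ℕ} (ω : Fin (T + 1) → 𝒪) (a : Bool) (t : Fin T) : Hist 𝒪 t :=
  (fun i => ω (Fin.castLE (Nat.succ_le_succ t.isLt.le) i), fun _ => a)

theorem Traj.hist_const {T : ℕ} (ω : Fin (T + 1) → 𝒪) (a : Bool) (r : Fin T → R) (t : Fin T) :
    Traj.hist (ω, fun _ => a, r) t = pathHist ω a t :=
  rfl

theorem pathHist_zero {T : ℕ} (ω : Fin (T + 2) → 𝒪) (a : Bool) :
    pathHist ω a 0 = initHist (ω 0) := by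
  refine Prod.ext (funext fun i => ?_) (funext fun i => i.elim0)
  fin_cases i
  rfl

theorem pathHist_succ {T : ℕ} (o : 𝒪) (ω : Fin (T + 1) → 𝒪) (a : Bool) (t : Fin T) :
    pathHist (Fin.cons o ω) a t.succ = Hist.cons o a (pathHist ω a t) := by
  refine Prod.ext (funext fun i => Fin.cases rfl (fun j => ?_) i)
    (funext fun i => Fin.cases rfl (fun _ => rfl) i)
  simp [pathHist, Hist.cons]

/-- The probability of rewards `r` and observations `ω 1, …, ω T` given `O₁ = ω 0` when `a` is
always played. -/
def pathWeight {T : ℕ} (q : TransKernel 𝒪 R) (a : Bool) (ω : Fin (T + 1) → 𝒪)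
    (r : Fin T → R) : ℝ :=
  ∏ t : Fin T, q t (pathHist ω a t) a (r t, ω t.succ)

theorem pathWeight_cons {T : ℕ} (q : TransKernel 𝒪 R) (a : Bool) (o : 𝒪)
    (ω : Fin (T + 1) → 𝒪) (r₀ : R) (r : Fin T → R) :
    pathWeight q a (Fin.cons o ω) (Fin.cons r₀ r)
      = q 0 (initHist o) a (r₀, ω 0) * pathWeight (qShift q o a) a ω r := by
  simp only [pathWeight, Fin.prod_univ_succ, pathHist_zero, pathHist_succ, Fin.cons_zero,
    Fin.cons_succ]
  rfl

end ForcedPaths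

theorem Fintype.sum_fin_succ_pi {X M : Type} [Fintype X] [AddCommMonoid M] {n : ℕ}
    (g : (Fin (n + 1) → X) → M) :
    ∑ f : Fin (n + 1) → X, g f = ∑ x : X, ∑ f : Fin n → X, g (Fin.cons x f) := by
  rw [← (Fin.consEquiv fun _ => X).sum_comp g, Fintype.sum_prod_type]
  rfl

section InitCondExp

variable {𝒪 R : Type} [Fintype 𝒪] [Fintype R] {T : ℕ}

/-- `E^a[G(O, R) | O₁ = o]`, the expectation under the policy always playing `a`. -/
noncomputable def initCondExp (q : TransKernel 𝒪 R) (a : Bool) (o : 𝒪)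
    (G : (Fin (T + 1) → 𝒪) → (Fin T → R) → ℝ) : ℝ :=
  ∑ ω : Fin T → 𝒪, ∑ r : Fin T → R, pathWeight q a (Fin.cons o ω) r * G (Fin.cons o ω) r

variable (q : TransKernel 𝒪 R) (a : Bool) (o : 𝒪)

theorem initCondExp_congr {G₁ G₂ : (Fin (T + 1) → 𝒪) → (Fin T → R) → ℝ}
    (hG : ∀ ω r, G₁ (Fin.cons o ω) r = G₂ (Fin.cons o ω) r) :
    initCondExp q a o G₁ = initCondExp q a o G₂ := by
  simp only [initCondExp, hG]

theorem initCondExp_add (G₁ G₂ : (Fin (T + 1) → 𝒪) → (Fin T → R) → ℝ) :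
    initCondExp q a o (fun ω r => G₁ ω r + G₂ ω r)
      = initCondExp q a o G₁ + initCondExp q a o G₂ := by
  simp only [initCondExp, mul_add, sum_add_distrib]

theorem initCondExp_const_mul (c : ℝ) (G : (Fin (T + 1) → 𝒪) → (Fin T → R) → ℝ) :
    initCondExp q a o (fun ω r => c * G ω r) = c * initCondExp q a o G := by
  simp only [initCondExp, mul_sum, mul_left_comm c]

/-- Conditioning on the first reward and the second observation. -/
theorem initCondExp_succ (G : (Fin (T + 2) → 𝒪) → (Fin (T + 1) → R) → ℝ) :
    initCondExp q a o G
      = ∑ ro : R × 𝒪, q 0 (initHist o) a ro *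
          initCondExp (qShift q o a) a ro.2 fun ω r => G (Fin.cons o ω) (Fin.cons ro.1 r) := by
  simp only [initCondExp, Fintype.sum_fin_succ_pi, pathWeight_cons, Fin.cons_zero, mul_sum,
    mul_assoc]
  rw [Fintype.sum_prod_type]
  exact (sum_congr rfl fun _ _ => sum_comm).trans sum_comm

theorem initCondExp_const (hq : IsNormalized T q) (c : ℝ) :
    initCondExp q a o (fun (_ : Fin (T + 1) → 𝒪) (_ : Fin T → R) => c) = c := by
  induction T generalizing q o with
  | zero => simp [initCondExp, pathWeight]
  | succ T ih =>
    simp only [initCondExp_succ, ih _ _ (hq.qShift o a), ← sum_mul,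
      hq 0 (Nat.succ_pos T) (initHist o) a, one_mul]

end InitCondExp

section TotalVariance

variable {𝒪 R : Type} [Fintype 𝒪] [Fintype R] (val : R → ℝ) {T : ℕ} {q : TransKernel 𝒪 R}
  (a : Bool)

theorem initCondExp_sum_val (hq : IsNormalized T q) (o : 𝒪) :
    initCondExp q a o (fun _ r => ∑ t : Fin T, val (r t)) = Vfun T q val a 0 (initHist o) := by
  induction T generalizing q o with
  | zero => simp [initCondExp, Vfun, Vaux]
  | succ T ih =>
    rw [initCondExp_succ, Vfun_initHist_succ]
    refine sum_congr rfl fun ro _ => congrArg _ ?_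
    simp only [Fin.sum_univ_succ, Fin.cons_zero, Fin.cons_succ]
    rw [initCondExp_add, initCondExp_const _ _ _ (hq.qShift o a), ih (hq.qShift o a)]

theorem initCondExp_sum_val_sub_Vfun (hq : IsNormalized T q) (o : 𝒪) :
    initCondExp q a o (fun _ r => (∑ t : Fin T, val (r t)) - Vfun T q val a 0 (initHist o))
      = 0 := by
  simp only [sub_eq_add_neg]
  rw [initCondExp_add, initCondExp_const _ _ _ hq, initCondExp_sum_val val a hq, add_neg_cancel]

theorem initCondExp_add_sq_of_eq_zero (hq : IsNormalized T q) (o : 𝒪) (c : ℝ)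
    {X : (Fin (T + 1) → 𝒪) → (Fin T → R) → ℝ} (hX : initCondExp q a o X = 0) :
    initCondExp q a o (fun ω r => (c + X ω r) ^ 2)
      = c ^ 2 + initCondExp q a o (fun ω r => X ω r ^ 2) := by
  simp only [add_sq]
  rw [initCondExp_add, initCondExp_add, initCondExp_const _ _ _ hq, initCondExp_const_mul, hX,
    mul_zero, add_zero]

theorem initCondExp_tdVar_zero (hq : IsNormalized (T + 1) q) (o : 𝒪) :
    initCondExp q a o
        (fun ω _ => tdVar (T + 1) q val a ((0 : Fin (T + 1)) : ℕ) (pathHist ω a 0))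
      = tdVar (T + 1) q val a 0 (initHist o) := by
  rw [initCondExp_congr q a o (G₂ := fun _ _ => tdVar (T + 1) q val a 0 (initHist o))
    fun ω r => by rw [pathHist_zero, Fin.cons_zero]; rfl, initCondExp_const _ _ _ hq]

theorem initCondExp_tdVar_succ (o : 𝒪) (t : Fin T) :
    initCondExp q a o (fun ω _ => tdVar (T + 1) q val a (t.succ : ℕ) (pathHist ω a t.succ))
      = ∑ ro : R × 𝒪, q 0 (initHist o) a ro *
          initCondExp (qShift q o a) a ro.2
            (fun ω _ => tdVar T (qShift q o a) val a t (pathHist ω a t)) := by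
  rw [initCondExp_succ]
  refine sum_congr rfl fun ro _ => congrArg _ (initCondExp_congr _ _ _ fun ω r => ?_)
  rw [pathHist_succ]
  exact tdVar_cons q val T o a t _

theorem initCondExp_sq_succ (hq : IsNormalized (T + 1) q) (o : 𝒪) :
    initCondExp q a o
        (fun _ r => ((∑ t : Fin (T + 1), val (r t)) - Vfun (T + 1) q val a 0 (initHist o)) ^ 2)
      = ∑ ro : R × 𝒪, q 0 (initHist o) a ro *
          ((val ro.1 + Vfun T (qShift q o a) val a 0 (initHist ro.2)
              - Vfun (T + 1) q val a 0 (initHist o)) ^ 2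
            + initCondExp (qShift q o a) a ro.2 fun _ r =>
                ((∑ t : Fin T, val (r t)) - Vfun T (qShift q o a) val a 0 (initHist ro.2)) ^ 2)
      := by
  rw [initCondExp_succ]
  refine sum_congr rfl fun ro _ => congrArg _ ?_
  rw [← initCondExp_add_sq_of_eq_zero a (hq.qShift o a) _ _
    (initCondExp_sum_val_sub_Vfun val a (hq.qShift o a) ro.2)]
  refine initCondExp_congr _ _ _ fun ω r => ?_
  simp only [Fin.sum_univ_succ, Fin.cons_zero, Fin.cons_succ]
  ring

theorem sum_initCondExp_tdVar (hq : IsNormalized T q) (o : 𝒪) :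
    ∑ t : Fin T, initCondExp q a o (fun ω _ => tdVar T q val a t (pathHist ω a t))
      = initCondExp q a o
          (fun _ r => ((∑ t : Fin T, val (r t)) - Vfun T q val a 0 (initHist o)) ^ 2) := by
  induction T generalizing q o with
  | zero => simp [initCondExp, Vfun, Vaux]
  | succ T ih =>
    rw [Fin.sum_univ_succ, initCondExp_tdVar_zero val a hq, tdVar_initHist_succ q val hq,
      initCondExp_sq_succ val a hq]
    simp only [initCondExp_tdVar_succ]
    rw [sum_comm (s := univ (α := Fin T))]
    simp only [← mul_sum, ih (hq.qShift o a), mul_add, sum_add_distrib]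

end TotalVariance

section Trajectories

variable {𝒪 R : Type} [Fintype 𝒪] [Fintype R] {T : ℕ}

theorem sum_traj_eq_of_actions_const {F : Traj 𝒪 R T → ℝ} (a : Bool)
    (hF : ∀ ω b r, b ≠ (fun _ => a) → F (ω, b, r) = 0) :
    ∑ τ, F τ = ∑ ω, ∑ r, F (ω, fun _ => a, r) := by
  simp only [Fintype.sum_prod_type]
  refine sum_congr rfl fun ω _ => ?_
  exact sum_eq_single _ (fun b _ hb => sum_eq_zero fun r _ => hF ω b r hb) (by simp)

variable (μ : 𝒪 → ℝ) (q : TransKernel 𝒪 R) (π : (t : ℕ) → Hist 𝒪 t → Bool → ℝ)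

theorem trajProb_const (ω : Fin (T + 1) → 𝒪) (a : Bool) (r : Fin T → R) :
    trajProb μ q π (ω, fun _ => a, r)
      = μ (ω 0) * (∏ t : Fin T, π t (pathHist ω a t) a) * pathWeight q a ω r := by
  rw [trajProb, prod_mul_distrib, mul_assoc]
  rfl

theorem trajProb_eq_zero (τ : Traj 𝒪 R T) (j : Fin T) (hj : π j (τ.hist j) (τ.2.1 j) = 0) :
    trajProb μ q π τ = 0 := by
  rw [trajProb, prod_eq_zero (mem_univ j) (by rw [hj, zero_mul]), mul_zero]

theorem sstarSq_eq_initCondExp [DecidableEq 𝒪] (val : R → ℝ) (o : 𝒪) (a : Bool) :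
    sstarSq T q val o a = initCondExp q a o fun _ r =>
      ((∑ t : Fin T, val (r t)) - Vfun T q val a 0 (initHist o)) ^ 2 := by
  rw [sstarSq, sum_traj_eq_of_actions_const a, Fintype.sum_fin_succ_pi,
    sum_eq_single o (fun x _ hx => ?_) (by simp)]
  · simp only [trajProb_const, globPol, if_true, prod_const_one, Fin.cons_zero, one_mul]
    rfl
  · simp [trajProb_const, hx]
  · intro ω b r hb
    obtain ⟨j, hj⟩ := Function.ne_iff.mp hb
    rw [trajProb_eq_zero _ _ _ _ j (if_neg hj), zero_mul]

end Trajectories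

theorem Fin.prod_eq_apply_zero {M : Type} [CommMonoid M] {T : ℕ} (t : Fin T) (f : Fin T → M)
    (hf : ∀ k : Fin T, (k : ℕ) ≠ 0 → f k = 1) : ∏ k, f k = f ⟨0, t.pos⟩ :=
  prod_eq_single _ (fun k _ hk => hf k fun h => hk (Fin.ext h)) (by simp)

section RepeatedInitialAction

variable {𝒪 : Type} {T : ℕ} (p : 𝒪 → ℝ)

def actProb (a : Bool) (o : 𝒪) : ℝ := if a then p o else 1 - p o

theorem classPol_pathHist (ω : Fin (T + 1) → 𝒪) (a : Bool) (k : Fin T) :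
    classPol 𝒪 p k (pathHist ω a k) a = if (k : ℕ) = 0 then actProb p a (ω 0) else 1 := by
  by_cases hk : (k : ℕ) = 0
  · have h0 : (pathHist ω a k).1 0 = ω 0 := congrArg ω (Fin.ext (by simp))
    simp only [classPol, dif_pos hk, if_pos hk, h0, actProb]
  · simp only [classPol, dif_neg hk, if_neg hk, pathHist, if_true]

theorem prod_classPol_pathHist (ω : Fin (T + 1) → 𝒪) (a : Bool) (t : Fin T) :
    ∏ k : Fin T, classPol 𝒪 p k (pathHist ω a k) a = actProb p a (ω 0) := by
  rw [Fin.prod_eq_apply_zero t _ fun k hk => by rw [classPol_pathHist, if_neg hk],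
    classPol_pathHist, if_pos rfl]

theorem prod_inv_sq_classPol_pathHist (ω : Fin (T + 1) → 𝒪) (a : Bool) (t : Fin T) :
    (∏ k : Fin T,
      if (k : ℕ) ≤ t then (classPol 𝒪 p k (pathHist ω a k) a ^ 2)⁻¹ else 1)
      = (actProb p a (ω 0) ^ 2)⁻¹ := by
  rw [Fin.prod_eq_apply_zero t _ fun k hk => by simp [classPol_pathHist, hk],
    if_pos (Nat.zero_le _), classPol_pathHist, if_pos rfl]

variable {R : Type} [Fintype 𝒪] [Fintype R]

theorem trajProb_classPol_eq_zero (μ : 𝒪 → ℝ) (q : TransKernel 𝒪 R) (ω : Fin (T + 1) → 𝒪)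
    {b : Fin T → Bool} (r : Fin T → R) (j k : Fin T) (hk : (k : ℕ) = 0) (hjk : b j ≠ b k) :
    trajProb μ q (classPol 𝒪 p) (ω, b, r) = 0 := by
  have hj : (j : ℕ) ≠ 0 := fun hj => hjk (congrArg b (Fin.ext (hj.trans hk.symm)))
  refine trajProb_eq_zero μ q _ _ j ?_
  rw [classPol, dif_neg hj, if_neg]
  exact fun h => hjk (h.trans (congrArg b (Fin.ext hk.symm)))

theorem isTerm_classPol (μ : 𝒪 → ℝ) (q : TransKernel 𝒪 R) (val : R → ℝ)
    (a : Bool) (t : Fin T) :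
    isTerm T μ q val (classPol 𝒪 p) a t
      = ∑ o, μ o * (actProb p a o)⁻¹ *
          initCondExp q a o (fun ω _ => tdVar T q val a t (pathHist ω a t)) := by
  rw [isTerm, sum_traj_eq_of_actions_const a, Fintype.sum_fin_succ_pi]
  · refine sum_congr rfl fun o _ => ?_
    simp only [initCondExp, mul_sum]
    refine sum_congr rfl fun ω _ => sum_congr rfl fun r _ => ?_
    simp only [Traj.hist_const, trajProb_const, prod_classPol_pathHist p _ a t, if_true,
      prod_inv_sq_classPol_pathHist p _ a t, Fin.cons_zero]
    have hP : actProb p a o * (actProb p a o ^ 2)⁻¹ = (actProb p a o)⁻¹ := by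
      rw [sq, mul_inv, ← mul_assoc]
      simpa using inv_mul_mul_self (actProb p a o)⁻¹
    linear_combination
      (μ o * pathWeight q a (Fin.cons o ω) r * tdVar T q val a t (pathHist _ a t)) * hP
  · intro ω b r hb
    by_cases h₀ : b ⟨0, t.pos⟩ = a
    · obtain ⟨j, hj⟩ := Function.ne_iff.mp hb
      rw [trajProb_classPol_eq_zero p μ q ω r j _ rfl fun h => hj (h.trans h₀), zero_mul,
        zero_mul]
    · rw [prod_eq_zero (mem_univ ⟨0, t.pos⟩) (by simp [h₀]), mul_zero]

end RepeatedInitialAction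

theorem sum_isTerm_classPol {𝒪 R : Type} [Fintype 𝒪] [DecidableEq 𝒪] [Fintype R] {T : ℕ}
    {q : TransKernel 𝒪 R} (hq : IsNormalized T q) (μ : 𝒪 → ℝ) (val : R → ℝ) (p : 𝒪 → ℝ)
    (a : Bool) :
    ∑ t : Fin T, isTerm T μ q val (classPol 𝒪 p) a t
      = ∑ o, μ o * (sstarSq T q val o a / actProb p a o) := by
  simp only [isTerm_classPol]
  rw [sum_comm]
  refine sum_congr rfl fun o _ => ?_
  rw [← mul_sum, sum_initCondExp_tdVar val a hq, ← sstarSq_eq_initCondExp, mul_assoc,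
    inv_mul_eq_div]

theorem nmdp_inclass_is_term_collapse_general {𝒪 : Type} [Fintype 𝒪] [DecidableEq 𝒪]
    (T : ℕ) (ℛ : Finset ℝ)
    (μ : 𝒪 → ℝ)
    (q : (t : ℕ) → Hist 𝒪 t → Bool → ↥ℛ × 𝒪 → ℝ)
    (hqsum : ∀ t, t < T → ∀ (h : Hist 𝒪 t) (a : Bool), ∑ ro : ↥ℛ × 𝒪, q t h a ro = 1)
    (p : 𝒪 → ℝ) :
    ∑ a : Bool, ∑ t : Fin T, isTerm T μ q (Subtype.val : ↥ℛ → ℝ) (classPol 𝒪 p) a t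
      = ∑ o : 𝒪, μ o *
          (sstarSq T q (Subtype.val : ↥ℛ → ℝ) o true / p o
            + sstarSq T q (Subtype.val : ↥ℛ → ℝ) o false / (1 - p o)) := by
  rw [Fintype.sum_bool, sum_isTerm_classPol hqsum, sum_isTerm_classPol hqsum, ← sum_add_distrib]
  simp only [actProb, if_true, Bool.false_eq_true, if_false, mul_add]

/-- **Collapse of the sequential importance-sampling variance term for in-class designs
(intermediate identity in the proof of Theorem 1 of the paper).**
For the behavior policy that draws `A₁` given `O₁ = o` with probability `p(o) ∈ (0,1)`
of `A₁ = 1` and sets `A_t = A₁` for all later `t`,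
`Σ_{a∈{0,1}} Σ_{t=1}^T E^{π^b}[σ_t²(H_t,a) Π_{k≤t} 1(A_k=a)/π_k^b(a|H_k)²]
  = E_{O₁∼μ}[σ_*²(O₁,1)/p(O₁) + σ_*²(O₁,0)/(1 − p(O₁))]`.
Rewards take values in the finite alphabet `ℛ ⊂ ℝ` (encoded as the subtype `↥ℛ`). -/
theorem nmdp_inclass_is_term_collapse {𝒪 : Type} [Fintype 𝒪] [DecidableEq 𝒪] [Nonempty 𝒪]
    (T : ℕ) (hT : 1 ≤ T) (ℛ : Finset ℝ)
    (μ : 𝒪 → ℝ) (hμ : ∀ o, 0 ≤ μ o) (hμ1 : ∑ o : 𝒪, μ o = 1)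
    (q : (t : ℕ) → Hist 𝒪 t → Bool → ↥ℛ × 𝒪 → ℝ)
    (hqnn : ∀ t, t < T → ∀ (h : Hist 𝒪 t) (a : Bool) (ro : ↥ℛ × 𝒪), 0 ≤ q t h a ro)
    (hqsum : ∀ t, t < T → ∀ (h : Hist 𝒪 t) (a : Bool), ∑ ro : ↥ℛ × 𝒪, q t h a ro = 1)
    (p : 𝒪 → ℝ) (hp : ∀ o, 0 < p o ∧ p o < 1) :
    ∑ a : Bool, ∑ t : Fin T, isTerm T μ q (Subtype.val : ↥ℛ → ℝ) (classPol 𝒪 p) a t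
      = ∑ o : 𝒪, μ o *
          (sstarSq T q (Subtype.val : ↥ℛ → ℝ) o true / p o
            + sstarSq T q (Subtype.val : ↥ℛ → ℝ) o false / (1 - p o)) :=
  nmdp_inclass_is_term_collapse_general T ℛ μ q hqsum p
end
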